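/- arXiv:1307.1886 — 4 statements merged into one kernel-verified Lean document; each statement's English description precedes it below -/
import Mathlib

section
/- The number of permutations of {1,...,n} that contain no decreasing subsequence of length 3 (i.e., avoid the pattern 321) equals the n-th Catalan number (2n)! / (n! (n+1)!). -/
open Finset

open Finset

/-- Padded ballot sequences: monotone `m` on `[0,n)` with `i ≤ m i < n`, zero outside. -/
private def IsBallot (n : ℕ) (m : ℕ → ℕ) : Prop :=
  (∀ i j, i ≤ j → j < n → m i ≤ m j) ∧ (∀ i, i < n → i ≤ m i ∧ m i < n) ∧
    (∀ i, n ≤ i → m i = 0)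

private lemma ballot_finite (n : ℕ) : Finite {m : ℕ → ℕ // IsBallot n m} := by
  have : Function.Injective (fun (m : {m : ℕ → ℕ // IsBallot n m}) (i : Fin n) =>
      (⟨m.1 i, (m.2.2.1 i i.2).2⟩ : Fin n)) := by
    intro a b hab
    ext i
    rcases lt_or_ge i n with h | h
    · exact congrArg Fin.val (congrFun hab ⟨i, h⟩)
    · rw [a.2.2.2 i h, b.2.2.2 i h]
  exact Finite.of_injective _ this

private noncomputable def bc (n : ℕ) : ℕ := Nat.card {m : ℕ → ℕ // IsBallot n m}

private lemma bc_zero : bc 0 = 1 := by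
  have h : IsBallot 0 (fun _ => 0) := ⟨fun i j _ h => by omega, fun i h => by omega, fun _ _ => rfl⟩
  have : Unique {m : ℕ → ℕ // IsBallot 0 m} := by
    refine ⟨⟨⟨_, h⟩⟩, ?_⟩
    rintro ⟨m, hm⟩
    ext i
    exact hm.2.2 i (Nat.zero_le i)
  rw [bc, Nat.card_unique]

private def glue (k n : ℕ) (m1 m2 : ℕ → ℕ) : ℕ → ℕ := fun i =>
  if i < k then m1 i + 1 else if i = k then k else if i ≤ n then m2 (i - (k+1)) + (k+1) else 0

private lemma glue_lt {k n i : ℕ} (m1 m2 : ℕ → ℕ) (h : i < k) :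
    glue k n m1 m2 i = m1 i + 1 := if_pos h

private lemma glue_self {k n : ℕ} (m1 m2 : ℕ → ℕ) : glue k n m1 m2 k = k := by
  rw [glue, if_neg (lt_irrefl k), if_pos rfl]

private lemma glue_mid {k n i : ℕ} (m1 m2 : ℕ → ℕ) (h : k < i) (h' : i ≤ n) :
    glue k n m1 m2 i = m2 (i - (k+1)) + (k+1) := by
  rw [glue, if_neg (by omega), if_neg (by omega), if_pos h']

private lemma glue_top {k n i : ℕ} (m1 m2 : ℕ → ℕ) (hk : k ≤ n) (h : n < i) :
    glue k n m1 m2 i = 0 := by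
  rw [glue, if_neg (by omega), if_neg (by omega), if_neg (by omega)]

private def cut1 (k : ℕ) (m : ℕ → ℕ) : ℕ → ℕ := fun i => if i < k then m i - 1 else 0

private def cut2 (k n : ℕ) (m : ℕ → ℕ) : ℕ → ℕ := fun j =>
  if j < n - k then m (k+1+j) - (k+1) else 0

private lemma cut1_lt {k i : ℕ} (m : ℕ → ℕ) (h : i < k) : cut1 k m i = m i - 1 := if_pos h

private lemma cut2_lt {k n j : ℕ} (m : ℕ → ℕ) (h : j < n - k) :
    cut2 k n m j = m (k+1+j) - (k+1) := if_pos h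

private lemma fiber_card (n k : ℕ) (hk : k ≤ n) :
    Nat.card {m : ℕ → ℕ // IsBallot (n+1) m ∧ (∀ i, i < k → m i ≠ i) ∧ m k = k}
      = bc k * bc (n - k) := by
  classical
  haveI := ballot_finite k
  haveI := ballot_finite (n - k)
  haveI := ballot_finite (n + 1)
  haveI : Finite {m : ℕ → ℕ // IsBallot (n+1) m ∧ (∀ i, i < k → m i ≠ i) ∧ m k = k} :=
    Finite.of_injective (fun x => (⟨x.1, x.2.1⟩ : {m : ℕ → ℕ // IsBallot (n+1) m}))
      (fun a b hab => Subtype.ext (by simpa [Subtype.ext_iff] using hab))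
  have hF1 : ∀ (m : ℕ → ℕ), IsBallot (n+1) m → (∀ i, i < k → m i ≠ i) → m k = k →
      IsBallot k (cut1 k m) := by
    intro m hm hne hfix
    obtain ⟨hmono, hbd, hz⟩ := hm
    refine ⟨fun i j hij hj => ?_, fun i hi => ?_, fun i hi => if_neg (by omega)⟩
    · rw [cut1_lt m (hij.trans_lt hj), cut1_lt m hj]
      exact Nat.sub_le_sub_right (hmono i j hij (by omega)) 1
    · have h1 := hbd i (by omega)
      have h2 := hne i hi
      have h3 : m i ≤ m k := hmono i k hi.le (by omega)
      rw [cut1_lt m hi]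
      omega
  have hF2 : ∀ (m : ℕ → ℕ), IsBallot (n+1) m → IsBallot (n - k) (cut2 k n m) := by
    intro m hm
    obtain ⟨hmono, hbd, hz⟩ := hm
    refine ⟨fun i j hij hj => ?_, fun j hj => ?_, fun j hj => if_neg (by omega)⟩
    · rw [cut2_lt m (hij.trans_lt hj), cut2_lt m hj]
      exact Nat.sub_le_sub_right (hmono _ _ (by omega) (by omega)) (k+1)
    · have h1 := hbd (k+1+j) (by omega)
      rw [cut2_lt m hj]
      omega
  have hGbd : ∀ (m1 m2 : ℕ → ℕ), IsBallot k m1 → IsBallot (n-k) m2 →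
      ∀ i, i ≤ n → i ≤ glue k n m1 m2 i ∧ glue k n m1 m2 i ≤ n ∧
        (i ≤ k → glue k n m1 m2 i ≤ k) ∧ (k < i → k + 1 ≤ glue k n m1 m2 i) := by
    intro m1 m2 h1 h2 i hi
    rcases lt_trichotomy i k with h | h | h
    · have := h1.2.1 i h
      rw [glue_lt m1 m2 h]
      omega
    · subst h
      rw [glue_self]
      omega
    · have := h2.2.1 (i - (k+1)) (by omega)
      rw [glue_mid m1 m2 h hi]
      omega
  have hG : ∀ (m1 m2 : ℕ → ℕ), IsBallot k m1 → IsBallot (n-k) m2 →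
      IsBallot (n+1) (glue k n m1 m2) ∧ (∀ i, i < k → glue k n m1 m2 i ≠ i) ∧
        glue k n m1 m2 k = k := by
    intro m1 m2 h1 h2
    refine ⟨⟨fun i j hij hj => ?_, fun i hi => ?_, fun i hi => glue_top m1 m2 hk (by omega)⟩,
      fun i hi => ?_, glue_self m1 m2⟩
    · -- monotone
      have bi := hGbd m1 m2 h1 h2 i (by omega)
      have bj := hGbd m1 m2 h1 h2 j (by omega)
      rcases lt_trichotomy j k with hjk | hjk | hjk
      · have hik := hij.trans_lt hjk
        rw [glue_lt m1 m2 hik, glue_lt m1 m2 hjk]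
        exact Nat.succ_le_succ (h1.1 i j hij hjk)
      · subst hjk
        rcases eq_or_lt_of_le hij with rfl | h
        · exact le_rfl
        · rw [glue_self]; omega
      · rcases lt_or_ge i (k+1) with hik | hik
        · omega
        · rw [glue_mid m1 m2 (by omega) (by omega), glue_mid m1 m2 hjk (by omega)]
          have := h2.1 (i - (k+1)) (j - (k+1)) (by omega) (by omega)
          omega
    · have := hGbd m1 m2 h1 h2 i (by omega)
      omega
    · have := h1.2.1 i hi
      rw [glue_lt m1 m2 hi]
      omega
  let T := {m : ℕ → ℕ // IsBallot (n+1) m ∧ (∀ i, i < k → m i ≠ i) ∧ m k = k}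
  let B := {m : ℕ → ℕ // IsBallot k m} × {m : ℕ → ℕ // IsBallot (n-k) m}
  let F : T → B := fun x =>
    (⟨cut1 k x.1, hF1 x.1 x.2.1 x.2.2.1 x.2.2.2⟩, ⟨cut2 k n x.1, hF2 x.1 x.2.1⟩)
  let G : B → T := fun p => ⟨glue k n p.1.1 p.2.1, (hG p.1.1 p.2.1 p.1.2 p.2.2).1,
    (hG p.1.1 p.2.1 p.1.2 p.2.2).2.1, (hG p.1.1 p.2.1 p.1.2 p.2.2).2.2⟩
  have hFinj : Function.Injective F := by
    intro x y hxy
    have h1 : cut1 k x.1 = cut1 k y.1 := congrArg (fun z => z.1.1) hxy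
    have h2 : cut2 k n x.1 = cut2 k n y.1 := congrArg (fun z => z.2.1) hxy
    refine Subtype.ext (funext fun i => ?_)
    rcases lt_trichotomy i k with h | h | h
    · have e1 := congrFun h1 i
      rw [cut1_lt _ h, cut1_lt _ h] at e1
      have bx := x.2.1.2.1 i (by omega)
      have by' := y.2.1.2.1 i (by omega)
      have hx := x.2.2.1 i h
      have hy := y.2.2.1 i h
      omega
    · rw [h, x.2.2.2, y.2.2.2]
    · rcases le_or_gt i n with h' | h'
      · have e2 := congrFun h2 (i - (k+1))
        rw [cut2_lt _ (by omega), cut2_lt _ (by omega)] at e2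
        rw [(by omega : k + 1 + (i - (k+1)) = i)] at e2
        have bx := x.2.1.2.1 i (by omega)
        have by' := y.2.1.2.1 i (by omega)
        omega
      · rw [x.2.1.2.2 i (by omega), y.2.1.2.2 i (by omega)]
  have hGinj : Function.Injective G := by
    intro p q hpq
    have h1 : glue k n p.1.1 p.2.1 = glue k n q.1.1 q.2.1 := congrArg Subtype.val hpq
    have e1 : p.1 = q.1 := by
      refine Subtype.ext (funext fun i => ?_)
      rcases lt_or_ge i k with h | h
      · have := congrFun h1 i
        rw [glue_lt _ _ h, glue_lt _ _ h] at this
        omega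
      · rw [p.1.2.2.2 i h, q.1.2.2.2 i h]
    have e2 : p.2 = q.2 := by
      refine Subtype.ext (funext fun j => ?_)
      rcases lt_or_ge j (n - k) with h | h
      · have := congrFun h1 (k+1+j)
        rw [glue_mid _ _ (by omega) (by omega), glue_mid _ _ (by omega) (by omega)] at this
        rw [(by omega : k + 1 + j - (k+1) = j)] at this
        omega
      · rw [p.2.2.2.2 j h, q.2.2.2.2 j h]
    exact Prod.ext e1 e2
  have hcard : Nat.card T = Nat.card B :=
    le_antisymm (Nat.card_le_card_of_injective F hFinj)
      (Nat.card_le_card_of_injective G hGinj)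
  rw [show Nat.card {m : ℕ → ℕ // IsBallot (n+1) m ∧ (∀ i, i < k → m i ≠ i) ∧ m k = k}
      = Nat.card T from rfl, hcard, Nat.card_prod]
  rfl

private lemma bc_succ (n : ℕ) : bc (n+1) = ∑ i : Fin (n+1), bc (i : ℕ) * bc (n - (i : ℕ)) := by
  classical
  haveI := ballot_finite (n+1)
  haveI : Fintype {m : ℕ → ℕ // IsBallot (n+1) m} := Fintype.ofFinite _
  have hfix : ∀ (m : {m : ℕ → ℕ // IsBallot (n+1) m}), ∃ i, i ≤ n ∧ m.1 i = i := fun m =>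
    ⟨n, le_rfl, by have := m.2.2.1 n (by omega); omega⟩
  set K : {m : ℕ → ℕ // IsBallot (n+1) m} → Fin (n+1) := fun m =>
    ⟨Nat.find (hfix m), by have := (Nat.find_spec (hfix m)).1; omega⟩ with hK
  have hterm : ∀ k : Fin (n+1),
      (Finset.univ.filter fun x => K x = k).card = bc (k : ℕ) * bc (n - (k : ℕ)) := by
    intro k
    rw [← fiber_card n k (by omega), ← Fintype.card_subtype, ← Nat.card_eq_fintype_card]
    haveI : Finite {m : ℕ → ℕ // IsBallot (n+1) m ∧ (∀ i, i < (k:ℕ) → m i ≠ i) ∧ m k = k} :=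
      Finite.of_injective (fun x => (⟨x.1, x.2.1⟩ : {m : ℕ → ℕ // IsBallot (n+1) m}))
        (fun a b hab => Subtype.ext (by simpa [Subtype.ext_iff] using hab))
    have hf : Function.Injective (fun (x : {x : {m : ℕ → ℕ // IsBallot (n+1) m} // K x = k}) =>
        (⟨x.1.1, x.1.2, by
            intro i hi he
            have hlt : i < Nat.find (hfix x.1) := by
              have := congrArg Fin.val x.2
              simp only [hK] at this
              omega
            exact (Nat.find_min (hfix x.1) hlt) ⟨by omega, he⟩, by
            have := Nat.find_spec (hfix x.1)
            have hv := congrArg Fin.val x.2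
            simp only [hK] at hv
            rw [← hv] at *
            exact this.2⟩ :
          {m : ℕ → ℕ // IsBallot (n+1) m ∧ (∀ i, i < (k:ℕ) → m i ≠ i) ∧ m k = k})) := by
      intro a b hab
      exact Subtype.ext (Subtype.ext (by simpa [Subtype.ext_iff] using hab))
    have hg : Function.Injective
        (fun (y : {m : ℕ → ℕ // IsBallot (n+1) m ∧ (∀ i, i < (k:ℕ) → m i ≠ i) ∧ m k = k}) =>
        (⟨⟨y.1, y.2.1⟩, by
            refine Fin.ext ?_
            simp only [hK]
            refine le_antisymm (Nat.find_min' _ ⟨by omega, y.2.2.2⟩) ?_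
            refine (Nat.le_find_iff _ _).2 fun i hi hc => y.2.2.1 i hi hc.2⟩ :
          {x : {m : ℕ → ℕ // IsBallot (n+1) m} // K x = k})) := by
      intro a b hab
      exact Subtype.ext (by simpa [Subtype.ext_iff] using hab)
    exact le_antisymm (Nat.card_le_card_of_injective _ hf) (Nat.card_le_card_of_injective _ hg)
  rw [bc, Nat.card_eq_fintype_card, ← Finset.card_univ,
    Finset.card_eq_sum_card_fiberwise (f := K) (t := Finset.univ) (fun x _ => Finset.mem_univ _)]
  exact Finset.sum_congr rfl fun k _ => hterm k

private lemma bc_eq_catalan (n : ℕ) : bc n = catalan n := by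
  induction n using Nat.strong_induction_on with
  | _ n ih =>
    match n with
    | 0 => rw [bc_zero, catalan_zero]
    | Nat.succ n =>
      rw [bc_succ, catalan_succ]
      exact Finset.sum_congr rfl fun i _ => by
        rw [ih i (by omega), ih (n - (i : ℕ)) (by omega)]

/-- A permutation `π ∈ S_n` is `k`-decomposable if it has a decreasing
subsequence of length `k`. -/
def HasDecSeq {n : ℕ} (π : Equiv.Perm (Fin n)) (k : ℕ) : Prop :=
  ∃ f : Fin k → Fin n, StrictMono f ∧ ∀ a b : Fin k, a < b → π (f b) < π (f a)

private lemma hasDec_of {n : ℕ} (π : Equiv.Perm (Fin n)) {a b c : Fin n} (hab : a < b)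
    (hbc : b < c) (h1 : π b < π a) (h2 : π c < π b) : HasDecSeq π 3 := by
  have hac : a < c := hab.trans hbc
  have h3 : π c < π a := h2.trans h1
  refine ⟨fun t => if t.1 = 0 then a else if t.1 = 1 then b else c, ?_, ?_⟩
  · rintro ⟨i, hi⟩ ⟨j, hj⟩ hij
    rw [Fin.mk_lt_mk] at hij
    interval_cases i <;> interval_cases j <;> simp_all
  · rintro ⟨i, hi⟩ ⟨j, hj⟩ hij
    rw [Fin.mk_lt_mk] at hij
    interval_cases i <;> interval_cases j <;> simp_all

private def rmaxF {n : ℕ} (π : Equiv.Perm (Fin n)) (i : Fin n) : ℕ :=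
  ((Finset.Iic i).image (fun j => (π j : ℕ))).max'
    (Finset.Nonempty.image ⟨i, Finset.mem_Iic.2 le_rfl⟩ _)

private lemma le_rmaxF {n : ℕ} (π : Equiv.Perm (Fin n)) {j i : Fin n} (h : j ≤ i) :
    (π j : ℕ) ≤ rmaxF π i := by
  unfold rmaxF
  apply Finset.le_max'
  exact Finset.mem_image.2 ⟨j, Finset.mem_Iic.2 h, rfl⟩

private lemma rmaxF_attained {n : ℕ} (π : Equiv.Perm (Fin n)) (i : Fin n) :
    ∃ j, j ≤ i ∧ (π j : ℕ) = rmaxF π i := by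
  unfold rmaxF
  have := Finset.max'_mem _ (Finset.Nonempty.image ⟨i, Finset.mem_Iic.2 le_rfl⟩
    (fun j => (π j : ℕ)))
  obtain ⟨j, hj, hje⟩ := Finset.mem_image.1 this
  exact ⟨j, Finset.mem_Iic.1 hj, hje⟩

private lemma rmaxF_mono {n : ℕ} (π : Equiv.Perm (Fin n)) {i j : Fin n} (h : i ≤ j) :
    rmaxF π i ≤ rmaxF π j := by
  unfold rmaxF
  apply Finset.max'_le
  intro y hy
  obtain ⟨a, ha, rfl⟩ := Finset.mem_image.1 hy
  exact le_rmaxF π ((Finset.mem_Iic.1 ha).trans h)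

private lemma rmaxF_lt {n : ℕ} (π : Equiv.Perm (Fin n)) (i : Fin n) : rmaxF π i < n := by
  obtain ⟨j, _, hje⟩ := rmaxF_attained π i
  rw [← hje]
  exact (π j).2

private lemma le_rmaxF_self {n : ℕ} (π : Equiv.Perm (Fin n)) (i : Fin n) :
    (i : ℕ) ≤ rmaxF π i := by
  have hcard : ((Finset.Iic i).image (fun j => (π j : ℕ))).card = (i : ℕ) + 1 := by
    rw [Finset.card_image_of_injective _ (fun a b hab => π.injective (Fin.ext hab)),
      Fin.card_Iic]
  by_contra h
  have hsub : (Finset.Iic i).image (fun j => (π j : ℕ)) ⊆ Finset.range ((i : ℕ)) := by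
    intro x hx
    obtain ⟨j, hj, rfl⟩ := Finset.mem_image.1 hx
    exact Finset.mem_range.2 (lt_of_le_of_lt (le_rmaxF π (Finset.mem_Iic.1 hj)) (by omega))
  have := Finset.card_le_card hsub
  rw [hcard, Finset.card_range] at this
  omega

private lemma filter_lt_card_lt {n : ℕ} (s : Finset (Fin n)) {i : Fin n} (hi : i ∈ s) :
    (s.filter (· < i)).card < s.card :=
  Finset.card_lt_card ((Finset.ssubset_iff_of_subset (Finset.filter_subset _ _)).2
    ⟨i, hi, by simp⟩)

private lemma orderEmb_count {n : ℕ} (s : Finset (Fin n)) (a : Fin s.card) :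
    (s.filter (· < s.orderEmbOfFin rfl a)).card = (a : ℕ) := by
  have himg : s.filter (· < s.orderEmbOfFin rfl a)
      = (Finset.univ.filter (· < a)).image (s.orderEmbOfFin rfl) := by
    ext x
    simp only [Finset.mem_filter, Finset.mem_image, Finset.mem_univ, true_and]
    constructor
    · rintro ⟨hxs, hlt⟩
      have hx : x ∈ Set.range (s.orderEmbOfFin rfl) := by
        rw [Finset.range_orderEmbOfFin]
        exact hxs
      obtain ⟨b, rfl⟩ := hx
      exact ⟨b, (s.orderEmbOfFin rfl).lt_iff_lt.1 hlt, rfl⟩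
    · rintro ⟨b, hb, rfl⟩
      exact ⟨Finset.orderEmbOfFin_mem _ _ _, (s.orderEmbOfFin rfl).lt_iff_lt.2 hb⟩
  rw [himg, Finset.card_image_of_injective _ (s.orderEmbOfFin rfl).injective]
  have huniv : Finset.univ.filter (· < a) = Finset.Iio a := by
    ext x
    simp
  rw [huniv, Fin.card_Iio]

private lemma orderEmb_index {n : ℕ} (s : Finset (Fin n)) {i : Fin n} (hi : i ∈ s) :
    s.orderEmbOfFin rfl ⟨(s.filter (· < i)).card, filter_lt_card_lt s hi⟩ = i := by
  have hx : i ∈ Set.range (s.orderEmbOfFin rfl) := by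
    rw [Finset.range_orderEmbOfFin]
    exact hi
  obtain ⟨b, rfl⟩ := hx
  exact congrArg _ (Fin.ext (orderEmb_count s b))

private lemma orderEmb_lt_of_count {n : ℕ} (s : Finset (Fin n)) (a : Fin s.card) {v : Fin n}
    (h : (a : ℕ) < (s.filter (· < v)).card) : s.orderEmbOfFin rfl a < v := by
  by_contra hle
  push_neg at hle
  have hsub : s.filter (· < v) ⊆ s.filter (· < s.orderEmbOfFin rfl a) := by
    intro x hx
    rw [Finset.mem_filter] at hx ⊢
    exact ⟨hx.1, lt_of_lt_of_le hx.2 hle⟩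
  have := Finset.card_le_card hsub
  rw [orderEmb_count] at this
  omega

private lemma strictMonoOn_eq_orderEmb {n : ℕ} (s : Finset (Fin n)) (f : Fin n → Fin n)
    (hmono : ∀ i ∈ s, ∀ j ∈ s, i < j → f i < f j) {t : Finset (Fin n)} (ht : s.image f = t)
    (hcard : t.card = s.card) {i : Fin n} (hi : i ∈ s) :
    f i = t.orderEmbOfFin hcard ⟨(s.filter (· < i)).card, filter_lt_card_lt s hi⟩ := by
  have hg : StrictMono (fun a : Fin s.card => f (s.orderEmbOfFin rfl a)) := by
    intro a b hab
    exact hmono _ (Finset.orderEmbOfFin_mem _ _ _) _ (Finset.orderEmbOfFin_mem _ _ _)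
      ((s.orderEmbOfFin rfl).lt_iff_lt.2 hab)
  have hmem : ∀ a, f (s.orderEmbOfFin rfl a) ∈ t := fun a =>
    ht ▸ Finset.mem_image_of_mem f (Finset.orderEmbOfFin_mem _ _ _)
  have huniq := Finset.orderEmbOfFin_unique hcard hmem hg
  conv_lhs => rw [← orderEmb_index s hi]
  exact congrFun huniq _


private def rmax {n : ℕ} (π : Equiv.Perm (Fin n)) : ℕ → ℕ := fun i =>
  if h : i < n then rmaxF π ⟨i, h⟩ else 0

private lemma isBallot_rmax {n : ℕ} (π : Equiv.Perm (Fin n)) : IsBallot n (rmax π) := by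
  refine ⟨fun i j hij hj => ?_, fun i hi => ?_, fun i hi => ?_⟩
  · rw [rmax, dif_pos (lt_of_le_of_lt hij hj), rmax, dif_pos hj]
    exact rmaxF_mono π (by exact hij)
  · rw [rmax, dif_pos hi]
    exact ⟨le_rmaxF_self π ⟨i, hi⟩, rmaxF_lt π ⟨i, hi⟩⟩
  · rw [rmax, dif_neg (by omega)]

private lemma maxpos_iff {n : ℕ} (π : Equiv.Perm (Fin n)) (i : Fin n) :
    (π i : ℕ) = rmaxF π i ↔ ∀ j, j < i → rmaxF π j < rmaxF π i := by
  constructor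
  · intro h j hj
    rcases lt_or_ge (rmaxF π j) (rmaxF π i) with h' | h'
    · exact h'
    · exfalso
      have hle : rmaxF π j ≤ rmaxF π i := rmaxF_mono π hj.le
      obtain ⟨j', hj', hval⟩ := rmaxF_attained π j
      have hcontra : j' = i := π.injective (Fin.ext (by omega))
      have := hj'.trans_lt hj
      rw [hcontra] at this
      exact lt_irrefl i this
  · intro h
    obtain ⟨j, hj, hval⟩ := rmaxF_attained π i
    rcases eq_or_lt_of_le hj with rfl | hlt
    · exact hval
    · exfalso
      have h1 := h j hlt
      have h2 : (π j : ℕ) ≤ rmaxF π j := le_rmaxF π le_rfl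
      omega

private lemma nonmax_increasing {n : ℕ} (π : Equiv.Perm (Fin n)) (hav : ¬ HasDecSeq π 3)
    {i j : Fin n} (hij : i < j) (hi : (π i : ℕ) < rmaxF π i) : π i < π j := by
  rcases lt_trichotomy (π i) (π j) with h | h | h
  · exact h
  · exact absurd (π.injective h) hij.ne
  · exfalso
    obtain ⟨i', hi', hval⟩ := rmaxF_attained π i
    have hlt : i' < i := by
      rcases eq_or_lt_of_le hi' with rfl | h' 
      · omega
      · exact h'
    refine hav (hasDec_of π hlt hij ?_ h)
    rw [Fin.lt_def]
    omega

private lemma image_compl_perm {n : ℕ} (π : Equiv.Perm (Fin n)) (A : Finset (Fin n)) :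
    Aᶜ.image (fun i => π i) = (A.image (fun i => π i))ᶜ := by
  classical
  ext v
  simp only [Finset.mem_image, Finset.mem_compl]
  constructor
  · rintro ⟨i, hi, rfl⟩ ⟨j, hj, hji⟩
    exact hi (π.injective hji ▸ hj)
  · intro h
    exact ⟨π.symm v, fun hc => h ⟨π.symm v, hc, π.apply_symm_apply v⟩, π.apply_symm_apply v⟩

private lemma rmax_inj {n : ℕ} (π σ : Equiv.Perm (Fin n)) (hπ : ¬ HasDecSeq π 3)
    (hσ : ¬ HasDecSeq σ 3) (h : rmax π = rmax σ) : π = σ := by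
  classical
  have hF : ∀ i : Fin n, rmaxF π i = rmaxF σ i := by
    intro i
    have := congrFun h (i : ℕ)
    rw [rmax, rmax, dif_pos i.2, dif_pos i.2] at this
    simpa using this
  set M : Finset (Fin n) := Finset.univ.filter (fun i => (π i : ℕ) = rmaxF π i) with hM
  have hMσ : ∀ i : Fin n, i ∈ M ↔ (σ i : ℕ) = rmaxF σ i := by
    intro i
    simp only [hM, Finset.mem_filter, Finset.mem_univ, true_and]
    rw [maxpos_iff, maxpos_iff]
    constructor <;> intro hh j hj
    · rw [← hF j, ← hF i]; exact hh j hj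
    · rw [hF j, hF i]; exact hh j hj
  have hMval : ∀ i ∈ M, π i = σ i := by
    intro i hi
    have h1 : (π i : ℕ) = rmaxF π i := (Finset.mem_filter.1 hi).2
    have h2 : (σ i : ℕ) = rmaxF σ i := (hMσ i).1 hi
    exact Fin.ext (by rw [h1, h2, hF])
  have himg : Mᶜ.image (fun i => π i) = Mᶜ.image (fun i => σ i) := by
    rw [image_compl_perm, image_compl_perm]
    congr 1
    exact Finset.image_congr (fun x hx => hMval x hx)
  have hπinc : ∀ i ∈ Mᶜ, ∀ j ∈ Mᶜ, i < j → π i < π j := by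
    intro i hi j hj hij
    apply nonmax_increasing π hπ hij
    have h1 := le_rmaxF π (le_refl i)
    have h2 : ¬ ((π i : ℕ) = rmaxF π i) := by
      have := Finset.mem_compl.1 hi
      simpa [hM] using this
    omega
  have hσinc : ∀ i ∈ Mᶜ, ∀ j ∈ Mᶜ, i < j → σ i < σ j := by
    intro i hi j hj hij
    apply nonmax_increasing σ hσ hij
    have h1 := le_rmaxF σ (le_refl i)
    have h2 : ¬ ((σ i : ℕ) = rmaxF σ i) := fun hc => (Finset.mem_compl.1 hi) ((hMσ i).2 hc)
    omega
  have hcardπ : (Mᶜ.image (fun i => π i)).card = Mᶜ.card :=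
    Finset.card_image_of_injective _ π.injective
  have hcardσ : (Mᶜ.image (fun i => π i)).card = Mᶜ.card := hcardπ
  refine Equiv.ext fun i => ?_
  by_cases hi : i ∈ M
  · exact hMval i hi
  · have hi' : i ∈ Mᶜ := Finset.mem_compl.2 hi
    rw [strictMonoOn_eq_orderEmb Mᶜ (fun i => π i) hπinc rfl hcardπ hi',
      strictMonoOn_eq_orderEmb Mᶜ (fun i => σ i) hσinc himg.symm hcardπ hi']

private lemma exists_avoiding {n : ℕ} (m : ℕ → ℕ) (hm : IsBallot n m) :
    ∃ π : Equiv.Perm (Fin n), ¬ HasDecSeq π 3 ∧ ∀ i : Fin n, rmaxF π i = m (i : ℕ) := by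
  classical
  obtain ⟨hmono, hbd, hz⟩ := hm
  set mf : Fin n → Fin n := fun i => ⟨m i, (hbd i i.2).2⟩ with hmf
  set S : Finset (Fin n) :=
    Finset.univ.filter (fun i => ∀ j : Fin n, j < i → m (j : ℕ) < m (i : ℕ)) with hS
  have hSstrict : ∀ s ∈ S, ∀ t ∈ S, s < t → m (s : ℕ) < m (t : ℕ) := by
    intro s _ t ht hst
    simp only [hS, Finset.mem_filter] at ht
    exact ht.2 s hst
  have P0 : ∀ i : ℕ, ∀ hi : i < n, ∃ s : Fin n, s ∈ S ∧ (s : ℕ) ≤ i ∧ m (s : ℕ) = m i := by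
    intro i
    induction i using Nat.strong_induction_on with
    | _ i ih =>
      intro hi
      by_cases hcase : (⟨i, hi⟩ : Fin n) ∈ S
      · exact ⟨⟨i, hi⟩, hcase, le_rfl, rfl⟩
      · simp only [hS, Finset.mem_filter, Finset.mem_univ, true_and, not_forall] at hcase
        obtain ⟨j, hj, hnot⟩ := hcase
        have hji : (j : ℕ) < i := hj
        have hmj : m (j : ℕ) = m i := le_antisymm (hmono j i (le_of_lt hji) hi) (not_lt.1 hnot)
        obtain ⟨s, hs1, hs2, hs3⟩ := ih (j : ℕ) hji j.2
        exact ⟨s, hs1, by omega, by rw [hs3, ← Fin.eta j j.2] at *; exact hmj⟩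
  have hmfinj : ∀ a ∈ S, ∀ b ∈ S, mf a = mf b → a = b := by
    intro a ha b hb hab
    have : m (a : ℕ) = m (b : ℕ) := congrArg Fin.val hab
    rcases lt_trichotomy a b with h | h | h
    · exact absurd (hSstrict a ha b hb h) (by omega)
    · exact h
    · exact absurd (hSstrict b hb a ha h) (by omega)
  set V : Finset (Fin n) := S.image mf with hV
  have hVcard : V.card = S.card := Finset.card_image_of_injOn hmfinj
  set T : Finset (Fin n) := Sᶜ with hT
  set W : Finset (Fin n) := Vᶜ with hW
  have hTW : T.card = W.card := by
    rw [hT, hW, Finset.card_compl, Finset.card_compl, hVcard]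
  have hmemT : ∀ i : Fin n, i ∉ S → i ∈ T := fun i hi => Finset.mem_compl.2 hi
  set ψ : Fin n → Fin n := fun i =>
    if hq : i ∈ S then mf i
    else W.orderEmbOfFin rfl ⟨(T.filter (· < i)).card,
      by rw [← hTW]; exact filter_lt_card_lt T (hmemT i hq)⟩ with hψ
  have hψS : ∀ i ∈ S, ψ i = mf i := fun i hi => dif_pos hi
  have hψT : ∀ (i : Fin n) (hi : i ∉ S), ψ i = W.orderEmbOfFin rfl
      ⟨(T.filter (· < i)).card, by rw [← hTW]; exact filter_lt_card_lt T (hmemT i hi)⟩ :=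
    fun i hi => dif_neg hi
  -- key counting bound
  have P2 : ∀ (i : Fin n), i ∉ S → (ψ i : ℕ) < m (i : ℕ) := by
    intro i hiS
    obtain ⟨s₀, hs₀S, hs₀le, hs₀val⟩ := P0 (i : ℕ) i.2
    have hs₀lei : s₀ ≤ i := hs₀le
    have hmaxS : ∀ s ∈ S, s ≤ i → s ≤ s₀ := by
      intro s hs hsi
      by_contra hc
      push_neg at hc
      have h1 := hSstrict s₀ hs₀S s hs hc
      have h2 : m (s : ℕ) ≤ m (i : ℕ) := hmono _ _ hsi i.2
      omega
    have hVfilt : V.filter (· < mf i) = (S.filter (· < s₀)).image mf := by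
      ext v
      constructor
      · intro hv
        rw [Finset.mem_filter] at hv
        obtain ⟨hvV, hvlt⟩ := hv
        obtain ⟨s, hs, rfl⟩ := Finset.mem_image.1 hvV
        refine Finset.mem_image.2 ⟨s, Finset.mem_filter.2 ⟨hs, ?_⟩, rfl⟩
        by_contra hc
        push_neg at hc
        have hle : m (s₀ : ℕ) ≤ m (s : ℕ) := by
          rcases eq_or_lt_of_le hc with rfl | h'
          · exact le_rfl
          · exact (hSstrict s₀ hs₀S s hs h').le
        have : (mf s : ℕ) < m (i : ℕ) := hvlt
        simp only [hmf] at this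
        omega
      · intro hv
        obtain ⟨s, hs, rfl⟩ := Finset.mem_image.1 hv
        rw [Finset.mem_filter] at hs
        refine Finset.mem_filter.2 ⟨Finset.mem_image.2 ⟨s, hs.1, rfl⟩, ?_⟩
        have := hSstrict s hs.1 s₀ hs₀S hs.2
        rw [Fin.lt_def]
        simp only [hmf]
        omega
    have c1 : (V.filter (· < mf i)).card = (S.filter (· < s₀)).card := by
      rw [hVfilt]
      exact Finset.card_image_of_injOn (fun a ha b hb hab =>
        hmfinj a (Finset.mem_filter.1 ha).1 b (Finset.mem_filter.1 hb).1 hab)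
    have c2 : (S.filter (· ≤ i)).card = (S.filter (· < s₀)).card + 1 := by
      have : S.filter (· ≤ i) = insert s₀ (S.filter (· < s₀)) := by
        ext s
        constructor
        · intro hs
          obtain ⟨hs1, hs2⟩ := Finset.mem_filter.1 hs
          rcases eq_or_lt_of_le (hmaxS s hs1 hs2) with h | h
          · exact Finset.mem_insert.2 (Or.inl h)
          · exact Finset.mem_insert.2 (Or.inr (Finset.mem_filter.2 ⟨hs1, h⟩))
        · intro hs
          rcases Finset.mem_insert.1 hs with rfl | hs'
          · exact Finset.mem_filter.2 ⟨hs₀S, hs₀lei⟩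
          · obtain ⟨hs1, hs2⟩ := Finset.mem_filter.1 hs'
            exact Finset.mem_filter.2 ⟨hs1, hs2.le.trans hs₀lei⟩
      rw [this, Finset.card_insert_of_notMem (by simp)]
    have c3 : (Finset.univ.filter (fun x : Fin n => x ≤ i)).card = (i : ℕ) + 1 := by
      have he : Finset.univ.filter (fun x : Fin n => x ≤ i) = Finset.Iic i := by
        ext x
        simp
      rw [he, Fin.card_Iic]
    have c4 : (Finset.univ.filter (fun x : Fin n => x ≤ i)).card
        = (S.filter (· ≤ i)).card + (T.filter (· ≤ i)).card := by
      rw [← Finset.card_union_of_disjoint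
        (Finset.disjoint_filter_filter (disjoint_compl_right)), ← Finset.filter_union,
        Finset.union_compl]
    have c5 : (T.filter (· ≤ i)).card = (T.filter (· < i)).card + 1 := by
      have : T.filter (· ≤ i) = insert i (T.filter (· < i)) := by
        ext x
        constructor
        · intro hx
          obtain ⟨hx1, hx2⟩ := Finset.mem_filter.1 hx
          rcases eq_or_lt_of_le hx2 with h | h
          · exact Finset.mem_insert.2 (Or.inl h)
          · exact Finset.mem_insert.2 (Or.inr (Finset.mem_filter.2 ⟨hx1, h⟩))
        · intro hx
          rcases Finset.mem_insert.1 hx with rfl | hx'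
          · exact Finset.mem_filter.2 ⟨hmemT x hiS, le_rfl⟩
          · obtain ⟨hx1, hx2⟩ := Finset.mem_filter.1 hx'
            exact Finset.mem_filter.2 ⟨hx1, hx2.le⟩
      rw [this, Finset.card_insert_of_notMem (by simp)]
    have c6 : (Finset.univ.filter (fun x : Fin n => x < mf i)).card = m (i : ℕ) := by
      have he : Finset.univ.filter (fun x : Fin n => x < mf i) = Finset.Iio (mf i) := by
        ext x
        simp
      rw [he, Fin.card_Iio]
    have c7 : (Finset.univ.filter (fun x : Fin n => x < mf i)).card
        = (V.filter (· < mf i)).card + (W.filter (· < mf i)).card := by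
      rw [← Finset.card_union_of_disjoint
        (Finset.disjoint_filter_filter (disjoint_compl_right)), ← Finset.filter_union,
        Finset.union_compl]
    have hge := (hbd (i : ℕ) i.2).1
    have hk : ((T.filter (· < i)).card) < (W.filter (· < mf i)).card := by omega
    rw [hψT i hiS]
    have := orderEmb_lt_of_count W ⟨(T.filter (· < i)).card, by
      rw [← hTW]; exact filter_lt_card_lt T (hmemT i hiS)⟩ hk
    exact this
  have hψle : ∀ i : Fin n, (ψ i : ℕ) ≤ m (i : ℕ) := by
    intro i
    by_cases hi : i ∈ S
    · rw [hψS i hi]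
    · exact (P2 i hi).le
  -- T-part increasing
  have hTinc : ∀ (a : Fin n), a ∉ S → ∀ (b : Fin n), b ∉ S → a < b → ψ a < ψ b := by
    intro a ha b hb hab
    rw [hψT a ha, hψT b hb]
    apply (W.orderEmbOfFin rfl).lt_iff_lt.2
    rw [Fin.mk_lt_mk]
    apply Finset.card_lt_card
    have hsub : T.filter (· < a) ⊆ T.filter (· < b) := by
      intro x hx
      obtain ⟨hx1, hx2⟩ := Finset.mem_filter.1 hx
      exact Finset.mem_filter.2 ⟨hx1, hx2.trans hab⟩
    exact (Finset.ssubset_iff_of_subset hsub).2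
      ⟨a, Finset.mem_filter.2 ⟨hmemT a ha, hab⟩, by simp⟩
  have hψinj : Function.Injective ψ := by
    intro a b hab
    by_cases ha : a ∈ S <;> by_cases hb : b ∈ S
    · rw [hψS a ha, hψS b hb] at hab
      exact hmfinj a ha b hb hab
    · exfalso
      have h1 : ψ a ∈ V := by rw [hψS a ha]; exact Finset.mem_image_of_mem mf ha
      have h2 : ψ b ∈ W := by rw [hψT b hb]; exact Finset.orderEmbOfFin_mem _ _ _
      rw [hab] at h1
      exact Finset.mem_compl.1 h2 h1
    · exfalso
      have h1 : ψ b ∈ V := by rw [hψS b hb]; exact Finset.mem_image_of_mem mf hb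
      have h2 : ψ a ∈ W := by rw [hψT a ha]; exact Finset.orderEmbOfFin_mem _ _ _
      rw [← hab] at h1
      exact Finset.mem_compl.1 h2 h1
    · rcases lt_trichotomy a b with h | h | h
      · exact absurd (hTinc a ha b hb h) (by rw [hab]; exact lt_irrefl _)
      · exact h
      · exact absurd (hTinc b hb a ha h) (by rw [hab]; exact lt_irrefl _)
  set π : Equiv.Perm (Fin n) := Equiv.ofBijective ψ (Finite.injective_iff_bijective.1 hψinj)
    with hπdef
  have hπa : ∀ i, π i = ψ i := fun i => rfl
  have havoid : ¬ HasDecSeq π 3 := by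
    rintro ⟨f, hf, hdec⟩
    have h01 : f 0 < f 1 := hf (by decide)
    have h12 : f 1 < f 2 := hf (by decide)
    have hd1 : π (f 1) < π (f 0) := hdec 0 1 (by decide)
    have hd2 : π (f 2) < π (f 1) := hdec 1 2 (by decide)
    have hb : f 1 ∉ S := by
      intro hbS
      have h1 : (ψ (f 0) : ℕ) ≤ m ((f 0 : Fin n) : ℕ) := hψle (f 0)
      have h2 : m ((f 0 : Fin n) : ℕ) ≤ m ((f 1 : Fin n) : ℕ) :=
        hmono _ _ h01.le (f 1).2
      have h3 : (ψ (f 1) : ℕ) = m ((f 1 : Fin n) : ℕ) := by rw [hψS _ hbS]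
      rw [hπa, hπa, Fin.lt_def] at hd1
      omega
    have hc : f 2 ∉ S := by
      intro hcS
      have h1 : (ψ (f 1) : ℕ) ≤ m ((f 1 : Fin n) : ℕ) := hψle (f 1)
      have h2 : m ((f 1 : Fin n) : ℕ) ≤ m ((f 2 : Fin n) : ℕ) :=
        hmono _ _ h12.le (f 2).2
      have h3 : (ψ (f 2) : ℕ) = m ((f 2 : Fin n) : ℕ) := by rw [hψS _ hcS]
      rw [hπa, hπa, Fin.lt_def] at hd2
      omega
    have := hTinc (f 1) hb (f 2) hc h12
    rw [hπa, hπa] at hd2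
    exact absurd this (by omega)
  refine ⟨π, havoid, fun i => ?_⟩
  apply le_antisymm
  · obtain ⟨j, hj, hval⟩ := rmaxF_attained π i
    rw [← hval, hπa]
    exact (hψle j).trans (hmono _ _ hj i.2)
  · obtain ⟨s₀, hs₀S, hs₀le, hs₀val⟩ := P0 (i : ℕ) i.2
    have : (π s₀ : ℕ) = m ((s₀ : Fin n) : ℕ) := by rw [hπa, hψS _ hs₀S]
    rw [← hs₀val, ← this]
    exact le_rmaxF π hs₀le

theorem num_not_three_decomposable_eq_catalan (n : ℕ) :
    Nat.card {π : Equiv.Perm (Fin n) // ¬ HasDecSeq π 3} =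
      (2 * n).factorial / (n.factorial * (n + 1).factorial) := by
  classical
  haveI := ballot_finite n
  have hcard : Nat.card {π : Equiv.Perm (Fin n) // ¬ HasDecSeq π 3}
      = Nat.card {m : ℕ → ℕ // IsBallot n m} := by
    refine le_antisymm ?_ ?_
    · exact Nat.card_le_card_of_injective
        (fun p => (⟨rmax p.1, isBallot_rmax p.1⟩ : {m : ℕ → ℕ // IsBallot n m}))
        (fun p q hpq => Subtype.ext (rmax_inj p.1 q.1 p.2 q.2 (congrArg Subtype.val hpq)))
    · have hex : ∀ (b : {m : ℕ → ℕ // IsBallot n m}),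
          ∃ π : Equiv.Perm (Fin n), ¬ HasDecSeq π 3 ∧ rmax π = b.1 := by
        intro b
        obtain ⟨π, h1, h2⟩ := exists_avoiding b.1 b.2
        refine ⟨π, h1, funext fun i => ?_⟩
        by_cases hi : i < n
        · rw [rmax, dif_pos hi]
          exact h2 ⟨i, hi⟩
        · rw [rmax, dif_neg hi, b.2.2.2 i (by omega)]
      choose g hg1 hg2 using hex
      refine Nat.card_le_card_of_injective (fun b => ⟨g b, hg1 b⟩) ?_
      intro b b' hbb
      have hg : g b = g b' := congrArg Subtype.val hbb
      exact Subtype.ext (by rw [← hg2 b, ← hg2 b', hg])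
  rw [hcard, show Nat.card {m : ℕ → ℕ // IsBallot n m} = bc n from rfl, bc_eq_catalan]
  rw [catalan_eq_centralBinom_div, Nat.centralBinom]
  have h1 : (2*n).choose n * n.factorial * (2*n - n).factorial = (2*n).factorial :=
    Nat.choose_mul_factorial_mul_factorial (by omega)
  rw [(by omega : 2*n - n = n)] at h1
  rw [← h1, Nat.factorial_succ]
  rw [show (2*n).choose n * n.factorial * n.factorial
      = (n.factorial * n.factorial) * ((2*n).choose n) by ring]
  rw [show n.factorial * ((n+1) * n.factorial) = (n.factorial * n.factorial) * (n+1) by ring]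
  rw [Nat.mul_div_mul_left _ _ (Nat.mul_pos n.factorial_pos n.factorial_pos)]
end

section
/- The number of standard Young tableaux with n cells having exactly k rows is at most k^n / k!. -/
/-- A standard Young tableau of shape `μ`: the cells of `μ` are filled
bijectively with `1, ..., μ.card`, strictly increasing along rows and
down columns; entries outside the diagram are `0`. -/
structure SYT (μ : YoungDiagram) where
  entry : ℕ → ℕ → ℕ
  bijOn : Set.BijOn (fun c : ℕ × ℕ => entry c.1 c.2) ↑μ.cells (Set.Icc 1 μ.card)
  row_strict : ∀ i j1 j2, j1 < j2 → (i, j2) ∈ μ → entry i j1 < entry i j2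
  col_strict : ∀ i1 i2 j, i1 < i2 → (i2, j) ∈ μ → entry i1 j < entry i2 j
  zero_outside : ∀ i j, (i, j) ∉ μ → entry i j = 0

namespace SYTaux

variable {μ : YoungDiagram}

theorem entry_mem (T : SYT μ) {c : ℕ × ℕ} (hc : c ∈ μ) :
    T.entry c.1 c.2 ∈ Set.Icc 1 μ.card := T.bijOn.mapsTo (by exact_mod_cast hc)

/-- The cell containing the value `m`. -/
noncomputable def cellOf (T : SYT μ) (m : ℕ) : ℕ × ℕ :=
  if h : m ∈ Set.Icc 1 μ.card then
    ((Set.mem_image _ _ _).1 (T.bijOn.surjOn h)).choose else (0, 0)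

theorem cellOf_spec (T : SYT μ) {m : ℕ} (hm : m ∈ Set.Icc 1 μ.card) :
    cellOf T m ∈ μ ∧ T.entry (cellOf T m).1 (cellOf T m).2 = m := by
  rw [cellOf, dif_pos hm]
  have h := ((Set.mem_image _ _ _).1 (T.bijOn.surjOn hm)).choose_spec
  exact ⟨by exact_mod_cast h.1, h.2⟩

theorem cellOf_entry (T : SYT μ) {c : ℕ × ℕ} (hc : c ∈ μ) :
    cellOf T (T.entry c.1 c.2) = c := by
  have hm := entry_mem T hc
  have h := cellOf_spec T hm
  exact T.bijOn.injOn (by exact_mod_cast h.1) (by exact_mod_cast hc) h.2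

theorem row_lt_colLen (T : SYT μ) {m : ℕ} (hm : m ∈ Set.Icc 1 μ.card) :
    (cellOf T m).1 < μ.colLen 0 := by
  have h := (cellOf_spec T hm).1
  have : ((cellOf T m).1, 0) ∈ μ :=
    μ.up_left_mem (j2 := (cellOf T m).2) le_rfl (Nat.zero_le _) (by exact h)
  exact YoungDiagram.mem_iff_lt_colLen.1 this

/-- The entries lying in row `i`. -/
noncomputable def rowFinset (T : SYT μ) (i : ℕ) : Finset ℕ :=
  (Finset.Icc 1 μ.card).filter (fun m => (cellOf T m).1 = i)

theorem mem_rowFinset (T : SYT μ) {i m : ℕ} :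
    m ∈ rowFinset T i ↔ m ∈ Set.Icc 1 μ.card ∧ (cellOf T m).1 = i := by
  simp [rowFinset, Set.mem_Icc]

theorem rowFinset_card (T : SYT μ) (i : ℕ) :
    (rowFinset T i).card = μ.rowLen i := by
  rw [← Finset.card_range (μ.rowLen i)]
  symm
  apply Finset.card_bij (fun j _ => T.entry i j)
  · intro j hj
    rw [Finset.mem_range] at hj
    have hc : (i, j) ∈ μ := YoungDiagram.mem_iff_lt_rowLen.2 hj
    rw [mem_rowFinset]
    exact ⟨entry_mem T hc, by rw [cellOf_entry T hc]⟩
  · intro j1 h1 j2 h2 h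
    rw [Finset.mem_range] at h1 h2
    by_contra hne
    rcases Nat.lt_or_ge j1 j2 with hlt | hge
    · exact absurd h (Nat.ne_of_lt (T.row_strict i j1 j2 hlt
        (YoungDiagram.mem_iff_lt_rowLen.2 h2)))
    · rcases Nat.lt_or_ge j2 j1 with hlt | hge2
      · exact absurd h.symm (Nat.ne_of_lt (T.row_strict i j2 j1 hlt
          (YoungDiagram.mem_iff_lt_rowLen.2 h1)))
      · exact hne (le_antisymm hge2 hge)
  · intro m hm
    rw [mem_rowFinset] at hm
    obtain ⟨hm1, hm2⟩ := hm
    have h := cellOf_spec T hm1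
    refine ⟨(cellOf T m).2, ?_, ?_⟩
    · rw [Finset.mem_range]
      exact YoungDiagram.mem_iff_lt_rowLen.1 (by
        have := h.1; rwa [show cellOf T m = (i, (cellOf T m).2) from
          Prod.ext hm2 rfl] at this)
    · rw [← hm2]; exact h.2

theorem entry_eq_of_rowFinset (T : SYT μ) (i : ℕ) (s : Finset ℕ)
    (hs : rowFinset T i = s) (hc : s.card = μ.rowLen i) :
    ∀ j : Fin (μ.rowLen i), T.entry i j = s.orderEmbOfFin hc j := by
  subst hs
  have := Finset.orderEmbOfFin_unique (f := fun j : Fin (μ.rowLen i) => T.entry i j)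
    hc ?_ ?_
  · intro j; exact congrFun this j
  · intro j
    have hc : (i, (j : ℕ)) ∈ μ := YoungDiagram.mem_iff_lt_rowLen.2 j.2
    rw [mem_rowFinset]
    exact ⟨entry_mem T hc, by rw [cellOf_entry T hc]⟩
  · intro j1 j2 h
    exact T.row_strict i j1 j2 h (YoungDiagram.mem_iff_lt_rowLen.2 j2.2)

theorem syt_ext {T U : SYT μ} (h : T.entry = U.entry) : T = U := by
  cases T; cases U; cases h; rfl

theorem eq_of_rows_eq {μ ν : YoungDiagram} (T : SYT μ) (U : SYT ν)
    (hcard : μ.card = ν.card)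
    (h : ∀ m ∈ Set.Icc 1 μ.card, (cellOf T m).1 = (cellOf U m).1) :
    (⟨μ, T⟩ : Σ μ : YoungDiagram, SYT μ) = ⟨ν, U⟩ := by
  have hrf : ∀ i, rowFinset T i = rowFinset U i := by
    intro i
    ext m
    rw [mem_rowFinset, mem_rowFinset, ← hcard]
    constructor
    · rintro ⟨h1, h2⟩; exact ⟨h1, (h m h1) ▸ h2⟩
    · rintro ⟨h1, h2⟩; exact ⟨h1, (h m h1).symm ▸ h2⟩
  have hrl : ∀ i, μ.rowLen i = ν.rowLen i := by
    intro i
    rw [← rowFinset_card T i, ← rowFinset_card U i, hrf]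
  have hshape : μ = ν := by
    ext x
    cases x with
    | mk i j =>
      rw [YoungDiagram.mem_cells, YoungDiagram.mem_cells,
        YoungDiagram.mem_iff_lt_rowLen, YoungDiagram.mem_iff_lt_rowLen, hrl]
  subst hshape
  congr 1
  apply syt_ext
  funext i j
  by_cases hc : (i, j) ∈ μ
  · have hj : j < μ.rowLen i := YoungDiagram.mem_iff_lt_rowLen.1 hc
    rw [entry_eq_of_rowFinset T i (rowFinset U i) (hrf i) (rowFinset_card U i) ⟨j, hj⟩,
      entry_eq_of_rowFinset U i (rowFinset U i) rfl (rowFinset_card U i) ⟨j, hj⟩]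
  · rw [T.zero_outside i j hc, U.zero_outside i j hc]

/-- first entry of row `i` -/
theorem firstEntry_le (T : SYT μ) {m : ℕ} (hm : m ∈ Set.Icc 1 μ.card) :
    T.entry (cellOf T m).1 0 ≤ m := by
  have h := cellOf_spec T hm
  rcases Nat.eq_zero_or_pos (cellOf T m).2 with h0 | h0
  · rw [← h0]; exact h.2.le
  · have := T.row_strict (cellOf T m).1 0 (cellOf T m).2 h0 (by
      simpa using h.1)
    rw [h.2] at this
    exact this.le

theorem firstEntry_strictMono (T : SYT μ) {i1 i2 : ℕ} (h : i1 < i2)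
    (h2 : i2 < μ.colLen 0) : T.entry i1 0 < T.entry i2 0 :=
  T.col_strict i1 i2 0 h (YoungDiagram.mem_iff_lt_colLen.2 h2)

theorem firstEntry_mem (T : SYT μ) {i : ℕ} (hi : i < μ.colLen 0) :
    T.entry i 0 ∈ Set.Icc 1 μ.card :=
  entry_mem T (YoungDiagram.mem_iff_lt_colLen.2 hi)

theorem row_firstEntry (T : SYT μ) {i : ℕ} (hi : i < μ.colLen 0) :
    (cellOf T (T.entry i 0)).1 = i := by
  rw [cellOf_entry T (c := (i, 0)) (YoungDiagram.mem_iff_lt_colLen.2 hi)]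

end SYTaux

open SYTaux in
/-- The number of standard Young tableaux with `n` cells and exactly `k`
rows is at most `k^n / k!`. -/
theorem card_syt_rows_eq_le (n k : ℕ) :
    (Nat.card { T : Σ μ : YoungDiagram, SYT μ // T.1.card = n ∧ T.1.colLen 0 = k } : ℚ) ≤
      (k : ℚ) ^ n / (k.factorial : ℚ) := by
  set S := { T : Σ μ : YoungDiagram, SYT μ // T.1.card = n ∧ T.1.colLen 0 = k }
  -- the row word of a tableau
  have hrowbound : ∀ (p : S) (m : Fin n),
      (cellOf p.1.2 (m + 1)).1 < k := by
    intro p m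
    have hm : (m : ℕ) + 1 ∈ Set.Icc 1 p.1.1.card := by
      rw [p.2.1]; exact Set.mem_Icc.2 ⟨Nat.le_add_left 1 m, Nat.succ_le_of_lt m.2⟩
    have := row_lt_colLen p.1.2 hm
    rwa [p.2.2] at this
  set w : S → Fin n → Fin k := fun p m => ⟨(cellOf p.1.2 (m + 1)).1, hrowbound p m⟩
    with hw
  set Φ : S × Equiv.Perm (Fin k) → (Fin n → Fin k) :=
    fun p m => p.2 (w p.1 m) with hΦ
  have hΦinj : Function.Injective Φ := by
    rintro ⟨p, σ⟩ ⟨q, τ⟩ hfe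
    have hcard : p.1.1.card = q.1.1.card := by rw [p.2.1, q.2.1]
    -- key: for each row i, the minimal entry in that row of q is at a position where
    -- the f-value pins down σ ∘ (row in p).
    have key : ∀ i : Fin k, ∃ m ∈ Set.Icc 1 n,
        (cellOf q.1.2 m).1 = (i : ℕ) ∧ ∀ m' ∈ Set.Icc 1 n,
          (cellOf q.1.2 m').1 = (i : ℕ) → m ≤ m' := by
      intro i
      refine ⟨q.1.2.entry i 0, ?_, ?_, ?_⟩
      · have := firstEntry_mem q.1.2 (i := i) (by rw [q.2.2]; exact i.2)
        rwa [q.2.1] at this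
      · exact row_firstEntry q.1.2 (by rw [q.2.2]; exact i.2)
      · intro m' hm' hrow
        have hm'' : m' ∈ Set.Icc 1 q.1.1.card := by rwa [q.2.1]
        have := firstEntry_le q.1.2 hm''
        rwa [hrow] at this
    -- σ ∘ w p = τ ∘ w q pointwise
    have hfe' : ∀ m : Fin n, σ (w p m) = τ (w q m) := fun m => congrFun hfe m
    -- the permutation π with σ ∘ π = τ
    set π : Equiv.Perm (Fin k) := τ.trans σ.symm with hπ
    have hπ' : ∀ i, σ (π i) = τ i := by intro i; simp [hπ]
    -- N_p (π i) ≤ N_q i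
    have hNle : ∀ (p q : S) (σ τ : Equiv.Perm (Fin k)),
        (∀ m : Fin n, σ (w p m) = τ (w q m)) →
        ∀ i : Fin k, p.1.2.entry ((σ.symm (τ i)) : Fin k) 0 ≤ q.1.2.entry i 0 := by
      intro p q σ τ hfe' i
      have hiq : (i : ℕ) < q.1.1.colLen 0 := by rw [q.2.2]; exact i.2
      set m := q.1.2.entry i 0 with hm
      have hmIcc : m ∈ Set.Icc 1 q.1.1.card := firstEntry_mem q.1.2 hiq
      have hmIcc' : m ∈ Set.Icc 1 n := by rwa [q.2.1] at hmIcc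
      obtain ⟨hm1, hmn⟩ := Set.mem_Icc.1 hmIcc'
      have hmlt : m - 1 < n := by omega
      set mF : Fin n := ⟨m - 1, hmlt⟩ with hmF
      have hm1' : (mF : ℕ) + 1 = m := by simp [hmF]; omega
      have hwq : w q mF = i := by
        apply Fin.ext
        show (cellOf q.1.2 ((mF : ℕ) + 1)).1 = (i : ℕ)
        rw [hm1']
        exact row_firstEntry q.1.2 hiq
      have : σ (w p mF) = τ i := by rw [hfe' mF, hwq]
      have hwp : w p mF = σ.symm (τ i) := by
        rw [← this]; simp
      have hle := firstEntry_le p.1.2 (m := m) (by rwa [p.2.1, ← q.2.1])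
      have : (cellOf p.1.2 m).1 = ((σ.symm (τ i) : Fin k) : ℕ) := by
        rw [← hwp]; show (cellOf p.1.2 m).1 = (cellOf p.1.2 ((mF:ℕ)+1)).1; rw [hm1']
      rwa [this] at hle
    have h1 := hNle p q σ τ hfe'
    have h2 := hNle q p τ σ (fun m => (hfe' m).symm)
    -- conclude N_p (π i) = N_q i hence π strict mono
    have hNeq : ∀ i : Fin k, p.1.2.entry ((π i) : ℕ) 0 = q.1.2.entry i 0 := by
      intro i
      refine le_antisymm (h1 i) ?_
      have := h2 (π i)
      have hsymm : τ.symm (σ (π i)) = i := by simp [hπ]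
      rw [hsymm] at this
      exact this
    have hπmono : StrictMono π := by
      intro i1 i2 h12
      have hq : q.1.2.entry i1 0 < q.1.2.entry i2 0 :=
        firstEntry_strictMono q.1.2 h12 (by rw [q.2.2]; exact i2.2)
      rw [← hNeq i1, ← hNeq i2] at hq
      by_contra hle
      push_neg at hle
      rcases lt_or_eq_of_le hle with hlt | heq
      · have := firstEntry_strictMono p.1.2 (i1 := (π i2 : ℕ)) (i2 := (π i1 : ℕ))
          (Fin.lt_iff_val_lt_val.mp hlt) (by rw [p.2.2]; exact (π i1).2)
        omega
      · rw [heq.symm] at hq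
        exact lt_irrefl _ hq
    have hπid : π = Equiv.refl (Fin k) := by
      have hr : Set.range ⇑π = Set.range (id : Fin k → Fin k) := by
        rw [Set.range_id, Set.range_eq_univ]
        exact π.surjective
      haveI : WellFoundedLT (Fin k) := inferInstance
      have h5 : ⇑π = (id : Fin k → Fin k) :=
        (hπmono.range_inj strictMono_id).1 hr
      ext i
      exact congrArg Fin.val (congrFun h5 i)
    have hστ : σ = τ := by
      ext i
      have h6 := hπ' i
      rw [hπid] at h6
      have h7 : σ i = τ i := by simpa using h6
      exact congrArg Fin.val h7
    -- now w p = w q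
    have hweq : ∀ m : Fin n, w p m = w q m := by
      intro m
      have := hfe' m
      rw [hστ] at this
      exact τ.injective this
    have hrows : ∀ m ∈ Set.Icc 1 p.1.1.card,
        (cellOf p.1.2 m).1 = (cellOf q.1.2 m).1 := by
      intro m hm
      rw [p.2.1] at hm
      obtain ⟨hm1, hmn⟩ := Set.mem_Icc.1 hm
      have hmlt : m - 1 < n := by omega
      have := hweq ⟨m - 1, hmlt⟩
      have hval := congrArg Fin.val this
      show (cellOf p.1.2 m).1 = (cellOf q.1.2 m).1
      have hm1' : (m - 1) + 1 = m := by omega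
      simpa [hw, hm1'] using hval
    have hsig : p.1 = q.1 := eq_of_rows_eq p.1.2 q.1.2 hcard hrows
    have : p = q := Subtype.ext hsig
    rw [this, hστ]
  -- cardinality bound
  have hcard_le : Nat.card S * k.factorial ≤ k ^ n := by
    have h := Nat.card_le_card_of_injective Φ hΦinj
    rwa [Nat.card_prod, Nat.card_eq_fintype_card (α := Equiv.Perm (Fin k)),
      Fintype.card_perm, Fintype.card_fin,
      Nat.card_eq_fintype_card (α := Fin n → Fin k), Fintype.card_fun,
      Fintype.card_fin, Fintype.card_fin] at h
  rw [le_div_iff₀ (by positivity)]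
  exact_mod_cast hcard_le
end

section
/- Under the RSK (Schensted) correspondence π ↦ (P,Q), the number of rows of the tableau P equals the length of the longest decreasing subsequence of the permutation π. -/
set_option maxRecDepth 8000


/-- Insert `x` into a row: if `x` exceeds all entries, append it (no bump);
otherwise replace the least entry `y > x` and bump `y`. -/
def insertIntoRow (x : ℕ) (r : List ℕ) : List ℕ × Option ℕ :=
  match r.findIdx? (fun y => decide (x < y)) with
  | none => (r ++ [x], none)
  | some i => (r.set i x, r[i]?)

/-- Schensted row insertion of `x` into a tableau given as its list of rows. -/
def rowInsert (x : ℕ) : List (List ℕ) → List (List ℕ)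
  | [] => [[x]]
  | r :: rest =>
    match insertIntoRow x r with
    | (r', none) => r' :: rest
    | (r', some y) => r' :: rowInsert y rest

/-- The insertion tableau `P` of a permutation `π`, built by Schensted row
insertion of `π(1), ..., π(n)` into the empty tableau. -/
def rskP {n : ℕ} (π : Equiv.Perm (Fin n)) : List (List ℕ) :=
  (List.ofFn fun i : Fin n => (π i : ℕ)).foldl (fun T x => rowInsert x T) []

namespace Schensted
open List


lemma fi_some_lt {x : ℕ} {r : List ℕ} {i : ℕ}
    (h : r.findIdx? (fun y => decide (x < y)) = some i) : i < r.length :=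
  (List.findIdx?_eq_some_iff_findIdx_eq.mp h).1

lemma fi_some_prop {x : ℕ} {r : List ℕ} {i : ℕ}
    (h : r.findIdx? (fun y => decide (x < y)) = some i) :
    x < r[i]'(fi_some_lt h) := by
  obtain ⟨hi, hfd⟩ := List.findIdx?_eq_some_iff_findIdx_eq.mp h
  have := List.findIdx_getElem (p := fun y => decide (x < y)) (xs := r)
    (w := by omega)
  simp only [decide_eq_true_eq] at this
  convert this using 2
  all_goals omega

lemma fi_some_before {x : ℕ} {r : List ℕ} {i : ℕ}
    (h : r.findIdx? (fun y => decide (x < y)) = some i)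
    {j : ℕ} (hj : j < i) : ¬ x < r[j]'(lt_trans hj (fi_some_lt h)) := by
  obtain ⟨hi, hfd⟩ := List.findIdx?_eq_some_iff_findIdx_eq.mp h
  have := List.not_of_lt_findIdx (p := fun y => decide (x < y)) (xs := r)
    (i := j) (by omega)
  simpa using this

lemma fi_some_min {x : ℕ} {r : List ℕ} {i : ℕ}
    (hs : List.Pairwise (· ≤ ·) r)
    (h : r.findIdx? (fun y => decide (x < y)) = some i)
    {a : ℕ} (ha : a ∈ r) (hxa : x < a) : r[i]'(fi_some_lt h) ≤ a := by
  obtain ⟨j, hj, rfl⟩ := List.mem_iff_getElem.mp ha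
  rcases lt_or_ge j i with hji | hij
  · exact absurd hxa (fi_some_before h hji)
  · rcases eq_or_lt_of_le hij with rfl | hlt
    · exact le_rfl
    · exact List.pairwise_iff_get.mp hs ⟨i, fi_some_lt h⟩ ⟨j, hj⟩ hlt

lemma fi_exists {x : ℕ} {r : List ℕ} {a : ℕ} (ha : a ∈ r) (hxa : x < a) :
    ∃ i, r.findIdx? (fun y => decide (x < y)) = some i := by
  cases h : r.findIdx? (fun y => decide (x < y)) with
  | none =>
    have := List.findIdx?_eq_none_iff.mp h a ha
    simp [hxa] at this
  | some i => exact ⟨i, rfl⟩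

lemma insertIntoRow_none {x : ℕ} {r : List ℕ}
    (h : r.findIdx? (fun y => decide (x < y)) = none) :
    insertIntoRow x r = (r ++ [x], none) := by
  unfold insertIntoRow; rw [h]

lemma insertIntoRow_some {x : ℕ} {r : List ℕ} {i : ℕ}
    (h : r.findIdx? (fun y => decide (x < y)) = some i) :
    insertIntoRow x r = (r.set i x, some (r[i]'(fi_some_lt h))) := by
  unfold insertIntoRow; rw [h]
  simp [List.getElem?_eq_getElem (fi_some_lt h)]

lemma sorted_insert {x : ℕ} {r : List ℕ} (hs : List.Pairwise (· ≤ ·) r) :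
    List.Pairwise (· ≤ ·) (insertIntoRow x r).1 := by
  cases h : r.findIdx? (fun y => decide (x < y)) with
  | none =>
    rw [insertIntoRow_none h]
    refine List.pairwise_append.mpr ⟨hs, by simp, ?_⟩
    intro a ha b hb
    have := List.findIdx?_eq_none_iff.mp h a ha
    simp only [decide_eq_false_iff_not, not_lt] at this
    simp at hb; omega
  | some i =>
    rw [insertIntoRow_some h]
    show List.Pairwise (· ≤ ·) (r.set i x)
    refine List.pairwise_iff_get.mpr ?_
    intro a b hab
    have hla : (a : ℕ) < r.length := by have := a.2; simpa using this
    have hlb : (b : ℕ) < r.length := by have := b.2; simpa using this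
    have hab' : (a : ℕ) < (b : ℕ) := hab
    have hget : ∀ p q : ℕ, (hpq : p < q) → (hq : q < r.length) → r[p]'(by omega) ≤ r[q] :=
      fun p q hpq hq => List.pairwise_iff_get.mp hs ⟨p, by omega⟩ ⟨q, hq⟩ hpq
    have hx : x < r[i]'(fi_some_lt h) := fi_some_prop h
    have hbef : ∀ j (hj : j < i), r[j]'(lt_trans hj (fi_some_lt h)) ≤ x :=
      fun j hj => le_of_not_gt (fi_some_before h hj)
    simp only [List.get_eq_getElem, List.getElem_set]
    by_cases hia : i = (a : ℕ)
    · rw [if_pos hia, if_neg (by omega : ¬ i = (b : ℕ))]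
      have h2 : r[i]'(fi_some_lt h) ≤ r[(b : ℕ)]'hlb := hget i (b : ℕ) (by omega) hlb
      exact le_trans (le_of_lt hx) h2
    · rw [if_neg hia]
      by_cases hib : i = (b : ℕ)
      · rw [if_pos hib]
        exact hbef (a : ℕ) (by omega)
      · rw [if_neg hib]
        exact hget _ _ hab' hlb

lemma mem_insert_self {x : ℕ} {r : List ℕ} : x ∈ (insertIntoRow x r).1 := by
  cases h : r.findIdx? (fun y => decide (x < y)) with
  | none => rw [insertIntoRow_none h]; simp
  | some i =>
    rw [insertIntoRow_some h]
    show x ∈ r.set i x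
    refine List.mem_iff_getElem.mpr ⟨i, ?_, ?_⟩
    · simpa using fi_some_lt h
    · exact List.getElem_set_self _

lemma mem_set_of_ne {a x : ℕ} {r : List ℕ} {i : ℕ} (ha : a ∈ r)
    (hne : ∀ (hi : i < r.length), a ≠ r[i]) : a ∈ r.set i x := by
  obtain ⟨j, hj, rfl⟩ := List.mem_iff_getElem.mp ha
  have hij : i ≠ j := by
    intro hh; subst hh; exact hne hj rfl
  refine List.mem_iff_getElem.mpr ⟨j, by simpa using hj, ?_⟩
  exact List.getElem_set_ne hij _



/-- Process a whole word through a single row, returning final row and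
the list of bumped-out values in order. -/
def rowProc : List ℕ → List ℕ → List ℕ × List ℕ
  | r, [] => (r, [])
  | r, x :: xs =>
    ((rowProc (insertIntoRow x r).1 xs).1,
      (insertIntoRow x r).2.toList ++ (rowProc (insertIntoRow x r).1 xs).2)

lemma rowProc_nil (r : List ℕ) : rowProc r [] = (r, []) := rfl

lemma rowProc_cons (r : List ℕ) (x : ℕ) (xs : List ℕ) :
    rowProc r (x :: xs) = ((rowProc (insertIntoRow x r).1 xs).1,
      (insertIntoRow x r).2.toList ++ (rowProc (insertIntoRow x r).1 xs).2) := rfl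

lemma rowProc_cons_none {r : List ℕ} {x : ℕ} (xs : List ℕ)
    (h : (insertIntoRow x r).2 = none) :
    rowProc r (x :: xs) = rowProc (insertIntoRow x r).1 xs := by
  rw [rowProc_cons, h]; rfl

lemma rowProc_cons_some {r : List ℕ} {x y : ℕ} (xs : List ℕ)
    (h : (insertIntoRow x r).2 = some y) :
    rowProc r (x :: xs) = ((rowProc (insertIntoRow x r).1 xs).1,
      y :: (rowProc (insertIntoRow x r).1 xs).2) := by
  rw [rowProc_cons, h]; rfl

lemma rowProc_out_len : ∀ (xs : List ℕ) (r : List ℕ),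
    ((rowProc r xs).2).length ≤ xs.length := by
  intro xs
  induction xs with
  | nil => intro r; simp [rowProc_nil]
  | cons x xs ih =>
    intro r
    cases h : (insertIntoRow x r).2 with
    | none =>
      rw [rowProc_cons_none xs h]
      exact le_trans (ih _) (by simp)
    | some y =>
      rw [rowProc_cons_some xs h]
      simpa using ih _

lemma foldl_decomp : ∀ (w : List ℕ) (r : List ℕ) (rest : List (List ℕ)),
    w.foldl (fun T x => rowInsert x T) (r :: rest)
      = (rowProc r w).1 :: (rowProc r w).2.foldl (fun T x => rowInsert x T) rest := by
  intro w
  induction w with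
  | nil => intro r rest; simp [rowProc_nil]
  | cons x xs ih =>
    intro r rest
    have hstep : rowInsert x (r :: rest) =
        (match (insertIntoRow x r).2 with
          | none => (insertIntoRow x r).1 :: rest
          | some y => (insertIntoRow x r).1 :: rowInsert y rest) := by
      show (match insertIntoRow x r with
        | (r', none) => r' :: rest
        | (r', some y) => r' :: rowInsert y rest) = _
      rcases insertIntoRow x r with ⟨r', o⟩
      cases o <;> rfl
    cases h : (insertIntoRow x r).2 with
    | none =>
      rw [List.foldl_cons, hstep, h, ih (insertIntoRow x r).1 rest,
        rowProc_cons_none xs h]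
    | some y =>
      rw [List.foldl_cons, hstep, h, ih (insertIntoRow x r).1 (rowInsert y rest),
        rowProc_cons_some xs h]
      rfl



lemma out_none_mem {x : ℕ} {r : List ℕ} (h : (insertIntoRow x r).2 = none)
    {a : ℕ} (ha : a ∈ r) : a ∈ (insertIntoRow x r).1 := by
  cases hfi : r.findIdx? (fun y => decide (x < y)) with
  | none => rw [insertIntoRow_none hfi]; exact List.mem_append_left _ ha
  | some i => rw [insertIntoRow_some hfi] at h; cases h

lemma out_some_mem {x y : ℕ} {r : List ℕ} (h : (insertIntoRow x r).2 = some y)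
    {a : ℕ} (ha : a ∈ r) (hay : a ≠ y) : a ∈ (insertIntoRow x r).1 := by
  cases hfi : r.findIdx? (fun y => decide (x < y)) with
  | none => rw [insertIntoRow_none hfi] at h; cases h
  | some i =>
    rw [insertIntoRow_some hfi] at h ⊢
    have hy : r[i]'(fi_some_lt hfi) = y := by simpa using h
    exact mem_set_of_ne ha (fun hi => by rw [← hy] at hay; exact hay)

lemma out_some_src {x y : ℕ} {r : List ℕ} (h : (insertIntoRow x r).2 = some y) :
    y ∈ r ∧ x < y := by
  cases hfi : r.findIdx? (fun y => decide (x < y)) with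
  | none => rw [insertIntoRow_none hfi] at h; cases h
  | some i =>
    rw [insertIntoRow_some hfi] at h
    have hy : r[i]'(fi_some_lt hfi) = y := by simpa using h
    exact ⟨hy ▸ List.getElem_mem _, hy ▸ fi_some_prop hfi⟩

lemma out_some_min {x y : ℕ} {r : List ℕ} (hs : List.Pairwise (· ≤ ·) r)
    (h : (insertIntoRow x r).2 = some y)
    {a : ℕ} (ha : a ∈ r) (hxa : x < a) : y ≤ a := by
  cases hfi : r.findIdx? (fun y => decide (x < y)) with
  | none => rw [insertIntoRow_none hfi] at h; cases h
  | some i =>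
    rw [insertIntoRow_some hfi] at h
    have hy : r[i]'(fi_some_lt hfi) = y := by simpa using h
    exact hy ▸ fi_some_min hs hfi ha hxa

lemma out_some_of_mem {x a : ℕ} {r : List ℕ} (ha : a ∈ r) (hxa : x < a) :
    ∃ y, (insertIntoRow x r).2 = some y := by
  obtain ⟨i, hfi⟩ := fi_exists ha hxa
  exact ⟨_, by rw [insertIntoRow_some hfi]⟩

lemma Astar : ∀ (w r : List ℕ) (z : ℕ) (s : List ℕ),
    List.Pairwise (· ≤ ·) r → List.IsChain (· > ·) (z :: s) →
    ((z ∈ r ∧ s.Sublist w) ∨ (z :: s).Sublist w) →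
    ∃ c : List ℕ, c.Sublist (rowProc r w).2 ∧ List.IsChain (· > ·) c ∧
      c.length = s.length ∧ ∀ a ∈ c.head?, a ≤ z := by
  intro w
  induction w with
  | nil =>
    intro r z s _ _ H
    rcases H with ⟨_, hsub⟩ | hsub
    · have : s = [] := List.sublist_nil.mp hsub
      subst this
      exact ⟨[], by simp, by simp, by simp, by simp⟩
    · exact absurd hsub (by simp)
  | cons x xs ih =>
    intro r z s hs hc H
    have hs' : List.Pairwise (· ≤ ·) (insertIntoRow x r).1 := sorted_insert hs
    rcases H with ⟨hzr, hsub⟩ | hsub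
    · -- z anchored in the row
      cases s with
      | nil => exact ⟨[], by simp, by simp, by simp, by simp⟩
      | cons z2 s' =>
        have hz2 : z > z2 := (List.isChain_cons_cons.mp hc).1
        have hc2 : List.IsChain (· > ·) (z2 :: s') := (List.isChain_cons_cons.mp hc).2
        cases hsub with
        | cons _ h1 =>
          -- (z2 :: s') <+ xs ; x is an unrelated insertion
          cases ho : (insertIntoRow x r).2 with
          | none =>
            have hzr' : z ∈ (insertIntoRow x r).1 := out_none_mem ho hzr
            rw [rowProc_cons_none xs ho]
            exact ih (insertIntoRow x r).1 z (z2 :: s') hs' hc (Or.inl ⟨hzr', h1⟩)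
          | some y =>
            by_cases hyz : y = z
            · -- z is bumped out now
              subst hyz
              obtain ⟨c', hsub', hchain', hlen', hhead'⟩ :=
                ih (insertIntoRow x r).1 z2 s' hs' hc2 (Or.inr h1)
              rw [rowProc_cons_some xs ho]
              refine ⟨y :: c', hsub'.cons₂ y, ?_, by simp [hlen'], by simp⟩
              exact List.isChain_cons.mpr
                ⟨fun b hb => lt_of_le_of_lt (hhead' b hb) hz2, hchain'⟩
            · have hzr' : z ∈ (insertIntoRow x r).1 :=
                out_some_mem ho hzr (fun hh => hyz hh.symm)
              obtain ⟨c, hsubc, hchainc, hlenc, hheadc⟩ :=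
                ih (insertIntoRow x r).1 z (z2 :: s') hs' hc (Or.inl ⟨hzr', h1⟩)
              rw [rowProc_cons_some xs ho]
              exact ⟨c, hsubc.cons y, hchainc, hlenc, hheadc⟩
        | cons_cons _ h1 =>
          -- x = z2 is inserted now; s' <+ xs
          obtain ⟨y, ho⟩ := out_some_of_mem hzr hz2
          obtain ⟨hyr, hxy⟩ := out_some_src ho
          have hyz : y ≤ z := out_some_min hs ho hzr hz2
          have hz2r' : x ∈ (insertIntoRow x r).1 := mem_insert_self
          obtain ⟨c', hsub', hchain', hlen', hhead'⟩ :=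
            ih (insertIntoRow x r).1 x s' hs' hc2 (Or.inl ⟨hz2r', h1⟩)
          rw [rowProc_cons_some xs ho]
          refine ⟨y :: c', hsub'.cons₂ y, ?_, by simp [hlen'], by simpa using hyz⟩
          exact List.isChain_cons.mpr
            ⟨fun b hb => lt_of_le_of_lt (hhead' b hb) hxy, hchain'⟩
    · -- chain entirely inside the word
      cases hsub with
      | cons _ h1 =>
        obtain ⟨c, hsubc, hchainc, hlenc, hheadc⟩ :=
          ih (insertIntoRow x r).1 z s hs' hc (Or.inr h1)
        cases ho : (insertIntoRow x r).2 with
        | none =>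
          rw [rowProc_cons_none xs ho]
          exact ⟨c, hsubc, hchainc, hlenc, hheadc⟩
        | some y =>
          rw [rowProc_cons_some xs ho]
          exact ⟨c, hsubc.cons y, hchainc, hlenc, hheadc⟩
      | cons_cons _ h1 =>
        have hzr' : x ∈ (insertIntoRow x r).1 := mem_insert_self
        obtain ⟨c, hsubc, hchainc, hlenc, hheadc⟩ :=
          ih (insertIntoRow x r).1 x s hs' hc (Or.inl ⟨hzr', h1⟩)
        cases ho : (insertIntoRow x r).2 with
        | none =>
          rw [rowProc_cons_none xs ho]
          exact ⟨c, hsubc, hchainc, hlenc, hheadc⟩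
        | some y =>
          rw [rowProc_cons_some xs ho]
          exact ⟨c, hsubc.cons y, hchainc, hlenc, hheadc⟩


lemma mem_insert_dest {a x : ℕ} {r : List ℕ}
    (h : a ∈ (insertIntoRow x r).1) : a ∈ r ∨ a = x := by
  unfold insertIntoRow at h
  cases hfi : r.findIdx? (fun y => decide (x < y)) <;> rw [hfi] at h
  · simpa using h
  · exact List.mem_or_eq_of_mem_set h

lemma Bstar : ∀ (w r : List ℕ) (o : ℕ) (cs : List ℕ),
    List.Pairwise (· ≤ ·) r → List.IsChain (· > ·) (o :: cs) →
    (o :: cs).Sublist (rowProc r w).2 →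
    ((∃ t ts, (t :: ts).Sublist w ∧ List.IsChain (· > ·) (t :: ts) ∧
        ts.length = cs.length ∧ t < o) ∧
     (o ∉ r → ∃ t ts, (t :: ts).Sublist w ∧ List.IsChain (· > ·) (t :: ts) ∧
        ts.length = cs.length + 1 ∧ t ≤ o)) := by
  intro w
  induction w with
  | nil =>
    intro r o cs _ _ hsub
    rw [rowProc_nil] at hsub
    exact absurd hsub (by simp)
  | cons x xs ih =>
    intro r o cs hs hc hsub
    have hs' : List.Pairwise (· ≤ ·) (insertIntoRow x r).1 := sorted_insert hs
    cases ho : (insertIntoRow x r).2 with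
    | none =>
      rw [rowProc_cons_none xs ho] at hsub
      have IH := ih (insertIntoRow x r).1 o cs hs' hc hsub
      constructor
      · obtain ⟨t, ts, h1, h2, h3, h4⟩ := IH.1
        exact ⟨t, ts, h1.cons x, h2, h3, h4⟩
      · intro _
        by_cases hox : o = x
        · subst hox
          obtain ⟨t, ts, h1, h2, h3, h4⟩ := IH.1
          exact ⟨o, t :: ts, h1.cons₂ o, List.isChain_cons_cons.mpr ⟨h4, h2⟩,
            by simp [h3], le_rfl⟩
        · have hor' : o ∉ (insertIntoRow x r).1 := by
            intro hmem
            rcases mem_insert_dest hmem with h | h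
            · exact ‹o ∉ r› h
            · exact hox h
          obtain ⟨t, ts, h1, h2, h3, h4⟩ := IH.2 hor'
          exact ⟨t, ts, h1.cons x, h2, h3, h4⟩
    | some y =>
      rw [rowProc_cons_some xs ho] at hsub
      cases hsub with
      | cons _ h1 =>
        have IH := ih (insertIntoRow x r).1 o cs hs' hc h1
        constructor
        · obtain ⟨t, ts, h1', h2, h3, h4⟩ := IH.1
          exact ⟨t, ts, h1'.cons x, h2, h3, h4⟩
        · intro hor
          by_cases hox : o = x
          · subst hox
            obtain ⟨t, ts, h1', h2, h3, h4⟩ := IH.1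
            exact ⟨o, t :: ts, h1'.cons₂ o, List.isChain_cons_cons.mpr ⟨h4, h2⟩,
              by simp [h3], le_rfl⟩
          · have hor' : o ∉ (insertIntoRow x r).1 := by
              intro hmem
              rcases mem_insert_dest hmem with h | h
              · exact hor h
              · exact hox h
            obtain ⟨t, ts, h1', h2, h3, h4⟩ := IH.2 hor'
            exact ⟨t, ts, h1'.cons x, h2, h3, h4⟩
      | cons_cons _ h1 =>
        -- here the head of the chain is exactly the element bumped out now
        obtain ⟨hyr, hxy⟩ := out_some_src ho
        constructor
        · cases cs with
          | nil =>
            exact ⟨x, [], (List.nil_sublist xs).cons₂ x, by simp, rfl, hxy⟩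
          | cons o2 cs' =>
            have h12 : o > o2 := (List.isChain_cons_cons.mp hc).1
            have hc2 : List.IsChain (· > ·) (o2 :: cs') := (List.isChain_cons_cons.mp hc).2
            by_cases ho2 : o2 ∈ (insertIntoRow x r).1
            · have ho2x : o2 ≤ x := by
                by_contra hgt
                push_neg at hgt
                rcases mem_insert_dest ho2 with h | h
                · exact absurd (out_some_min hs ho h hgt) (by omega)
                · omega
              obtain ⟨t, ts, h1', h2', h3', h4'⟩ :=
                (ih (insertIntoRow x r).1 o2 cs' hs' hc2 h1).1
              refine ⟨x, t :: ts, h1'.cons₂ x,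
                List.isChain_cons_cons.mpr ⟨by omega, h2'⟩, by simp [h3'], hxy⟩
            · obtain ⟨t, ts, h1', h2', h3', h4'⟩ :=
                (ih (insertIntoRow x r).1 o2 cs' hs' hc2 h1).2 ho2
              exact ⟨t, ts, h1'.cons x, h2', by simp [h3'],
                lt_of_le_of_lt h4' h12⟩
        · intro hor
          exact absurd hyr hor


/-- The set of lengths of strictly decreasing sublists of `w`. -/
def DecSet (w : List ℕ) : Set ℕ :=
  {k | ∃ c : List ℕ, List.IsChain (· > ·) c ∧ c.Sublist w ∧ c.length = k}

lemma zero_mem_DecSet (w : List ℕ) : 0 ∈ DecSet w :=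
  ⟨[], by simp, by simp, rfl⟩

lemma bddAbove_DecSet (w : List ℕ) : BddAbove (DecSet w) :=
  ⟨w.length, fun k ⟨c, _, hsub, hlen⟩ => hlen ▸ hsub.length_le⟩

def Pw (w : List ℕ) : List (List ℕ) := w.foldl (fun T x => rowInsert x T) []

lemma Pw_decomp (x : ℕ) (xs : List ℕ) :
    Pw (x :: xs) = (rowProc [] (x :: xs)).1 :: Pw ((rowProc [] (x :: xs)).2) := by
  have h0 : insertIntoRow x [] = ([x], none) := by
    unfold insertIntoRow
    rw [List.findIdx?_nil]
    rfl
  have h1 : rowProc [] (x :: xs) = rowProc [x] xs := by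
    rw [rowProc_cons_none xs (by rw [h0]), h0]
  have h2 : Pw (x :: xs) = List.foldl (fun T x => rowInsert x T) ([x] :: []) xs := by
    unfold Pw
    rw [List.foldl_cons]
    rfl
  rw [h2, foldl_decomp xs [x] [], h1]
  rfl

lemma Pw_length : ∀ (N : ℕ) (w : List ℕ), w.length ≤ N →
    (Pw w).length = sSup (DecSet w) := by
  intro N
  induction N with
  | zero =>
    intro w hw
    have : w = [] := List.length_eq_zero_iff.mp (Nat.le_zero.mp hw)
    subst this
    have h1 : DecSet [] = {0} := by
      ext k
      constructor
      · rintro ⟨c, _, hsub, rfl⟩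
        simp [List.sublist_nil.mp hsub]
      · rintro rfl
        exact zero_mem_DecSet []
    simp [Pw, h1]
  | succ N ihN =>
    intro w hw
    cases w with
    | nil =>
      have h1 : DecSet [] = {0} := by
        ext k
        constructor
        · rintro ⟨c, _, hsub, rfl⟩
          simp [List.sublist_nil.mp hsub]
        · rintro rfl
          exact zero_mem_DecSet []
      simp [Pw, h1]
    | cons x xs =>
      set os := (rowProc [] (x :: xs)).2 with hos
      have hoslen : os.length ≤ xs.length := by
        have h0 : insertIntoRow x [] = ([x], none) := by
          unfold insertIntoRow; rw [List.findIdx?_nil]; rfl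
        rw [hos, rowProc_cons_none xs (by rw [h0]), h0]
        exact rowProc_out_len xs [x]
      have hIH : (Pw os).length = sSup (DecSet os) := by
        refine ihN os ?_
        simp only [List.length_cons] at hw
        omega
      set m := sSup (DecSet os) with hm
      have hmem : m ∈ DecSet os := Nat.sSup_mem ⟨0, zero_mem_DecSet os⟩ (bddAbove_DecSet os)
      -- m + 1 is achieved in w
      have hup : m + 1 ∈ DecSet (x :: xs) := by
        obtain ⟨c, hchain, hsub, hlen⟩ := hmem
        cases c with
        | nil =>
          refine ⟨[x], by simp, (List.nil_sublist xs).cons₂ x, by simp [← hlen]⟩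
        | cons o csx =>
          obtain ⟨t, ts, h1, h2, h3, h4⟩ :=
            (Bstar (x :: xs) [] o csx (by simp) hchain (hos ▸ hsub)).2 (by simp)
          exact ⟨t :: ts, h2, h1, by simp [h3, ← hlen]⟩
      -- everything in w is at most m + 1
      have hdown : ∀ k ∈ DecSet (x :: xs), k ≤ m + 1 := by
        rintro k ⟨c, hchain, hsub, rfl⟩
        cases c with
        | nil => simp
        | cons z s =>
          obtain ⟨c', hsub', hchain', hlen', _⟩ :=
            Astar (x :: xs) [] z s (by simp) hchain (Or.inr hsub)
          have : s.length ∈ DecSet os := ⟨c', hchain', hos ▸ hsub', hlen'⟩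
          have hle : s.length ≤ m := le_csSup (bddAbove_DecSet os) this
          rw [List.length_cons]
          omega
      have hsup : sSup (DecSet (x :: xs)) = m + 1 :=
        le_antisymm (csSup_le ⟨0, zero_mem_DecSet _⟩ hdown)
          (le_csSup (bddAbove_DecSet _) hup)
      rw [hsup, Pw_decomp x xs, List.length_cons, ← hos, hIH]



lemma decset_eq {n : ℕ} (π : Equiv.Perm (Fin n)) :
    {k : ℕ | HasDecSeq π k} = DecSet (List.ofFn fun i : Fin n => (π i : ℕ)) := by
  have hlen : (List.ofFn fun i : Fin n => (π i : ℕ)).length = n := by simp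
  have hval : ∀ (j : ℕ) (hj : j < (List.ofFn fun i : Fin n => (π i : ℕ)).length),
      (List.ofFn fun i : Fin n => (π i : ℕ))[j] = (π ⟨j, hlen ▸ hj⟩ : ℕ) := by
    intro j hj
    rw [List.getElem_ofFn]
  ext k
  simp only [Set.mem_setOf_eq]
  constructor
  · rintro ⟨f, hf, hdec⟩
    refine ⟨List.map (fun x : Fin (List.ofFn fun i : Fin n => (π i : ℕ)).length =>
        (List.ofFn fun i : Fin n => (π i : ℕ))[(x : ℕ)])
        (List.ofFn fun a : Fin k => Fin.cast hlen.symm (f a)),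
      ?_, List.map_getElem_sublist ?_, by rw [List.length_map, List.length_ofFn]⟩
    · rw [List.isChain_iff_pairwise, List.pairwise_map, List.pairwise_ofFn]
      intro i j hij
      show _ > _
      rw [hval _ _, hval _ _]
      have hcollapse : ∀ (p : Fin k) (hp : (↑(Fin.cast hlen.symm (f p)) : ℕ) < n),
          π (⟨(↑(Fin.cast hlen.symm (f p)) : ℕ), hp⟩ : Fin n) = π (f p) :=
        fun p hp => congrArg π (Fin.ext (by simp))
      rw [hcollapse i _, hcollapse j _]
      exact_mod_cast hdec i j hij
    · rw [List.pairwise_ofFn]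
      intro i j hij
      have := hf hij
      rw [Fin.lt_def] at this ⊢
      simpa using this
  · rintro ⟨u, hchain, hsub, rfl⟩
    obtain ⟨is, hceq, hpair⟩ := List.sublist_eq_map_getElem hsub
    have hisl : is.length = u.length := by rw [hceq]; simp
    refine ⟨fun a => Fin.cast hlen (is[(a : ℕ)]'(lt_of_lt_of_eq a.2 hisl.symm)), ?_, ?_⟩
    · intro a b hab
      have := List.pairwise_iff_getElem.mp hpair (a : ℕ) (b : ℕ)
        (lt_of_lt_of_eq a.2 hisl.symm) (lt_of_lt_of_eq b.2 hisl.symm) hab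
      rw [Fin.lt_def] at this ⊢
      simpa using this
    · intro a b hab
      have hpw := List.isChain_iff_pairwise.mp hchain
      have h2 := List.pairwise_iff_getElem.mp hpw (a : ℕ) (b : ℕ) a.2 b.2 hab
      have hc : ∀ (j : ℕ) (hj : j < u.length),
          u[j]'hj = (π (Fin.cast hlen (is[j]'(lt_of_lt_of_eq hj hisl.symm))) : ℕ) := by
        intro j hj
        have e1 := List.getElem_of_eq hceq hj
        rw [List.getElem_map] at e1
        rw [Fin.getElem_fin, hval _ _] at e1
        rw [e1]
        exact congrArg (fun t : Fin n => ((π t : Fin n) : ℕ)) (Fin.ext (by simp))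
      rw [hc (a : ℕ) a.2, hc (b : ℕ) b.2] at h2
      exact_mod_cast h2


end Schensted

/-- The number of rows of the Schensted insertion tableau `P` of `π` equals
the length of the longest decreasing subsequence of `π`. -/
theorem rskP_length_eq_longest_dec {n : ℕ} (π : Equiv.Perm (Fin n)) :
    (rskP π).length = sSup {k : ℕ | HasDecSeq π k} := by
  rw [Schensted.decset_eq π]
  exact Schensted.Pw_length (List.ofFn fun i : Fin n => (π i : ℕ)).length _ le_rfl
end

section
/- The number of standard Young tableaux of shape λ ⊢ n equals n! divided by the product of the hook lengths of all cells of λ (the hook length formula). -/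
/-- The hook length of the cell `c` of `μ`: the arm, plus the leg, plus one. -/
def hookLength (μ : YoungDiagram) (c : ℕ × ℕ) : ℕ :=
  (μ.rowLen c.1 - c.2) + (μ.colLen c.2 - c.1) - 1

open Polynomial Finset

lemma basis_eq (s : Finset ℕ) (v : ℕ → ℚ) (i : ℕ) :
    Lagrange.basis s v i = C (∏ j ∈ s.erase i, (v i - v j)⁻¹) * Lagrange.nodal (s.erase i) v := by
  unfold Lagrange.basis Lagrange.basisDivisor
  rw [Lagrange.nodal_eq, Finset.prod_mul_distrib, map_prod]

lemma interp_coeff (s : Finset ℕ) (v : ℕ → ℚ) (hv : Set.InjOn v s) (f : ℚ[X])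
    (hf : f.degree < s.card) :
    f.coeff (s.card - 1) = ∑ i ∈ s, f.eval (v i) * ∏ j ∈ s.erase i, (v i - v j)⁻¹ := by
  conv_lhs => rw [Lagrange.eq_interpolate hv hf]
  rw [Lagrange.interpolate_apply, Polynomial.finset_sum_coeff]
  refine Finset.sum_congr rfl fun i hi => ?_
  have hmon : (Lagrange.nodal (s.erase i) v).Monic := Lagrange.nodal_monic
  have hdeg : (Lagrange.nodal (s.erase i) v).natDegree = (s.erase i).card := by
    simp [Lagrange.natDegree_nodal]
  have hc : (s.erase i).card = s.card - 1 := Finset.card_erase_of_mem hi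
  have h1 : (Lagrange.nodal (s.erase i) v).coeff (s.card - 1) = 1 := by
    rw [← hc, ← hdeg]; exact hmon.coeff_natDegree
  rw [basis_eq, ← mul_assoc, ← C_mul, coeff_C_mul, h1, mul_one]

namespace Multiset
lemma esymm_cons (a : ℚ) (m : Multiset ℚ) (n : ℕ) :
    (a ::ₘ m).esymm (n+1) = m.esymm (n+1) + a * m.esymm n := by
  simp only [esymm, powersetCard_cons, Multiset.map_add, Multiset.sum_add, map_map,
    Function.comp_def, Multiset.prod_cons]
  rw [← Multiset.sum_map_mul_left]

@[simp] lemma esymm_zero' (m : Multiset ℚ) : m.esymm 0 = 1 := by simp [esymm]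

lemma esymm_one' (m : Multiset ℚ) : m.esymm 1 = m.sum := by
  induction m using Multiset.induction with
  | empty => simp [esymm, powersetCard_zero_right]
  | cons a s ih => rw [esymm_cons, ih]; simp; ring

lemma esymm_two (m : Multiset ℚ) :
    2 * m.esymm 2 = m.sum ^ 2 - (m.map (· ^ 2)).sum := by
  induction m using Multiset.induction with
  | empty => simp [esymm, powersetCard_zero_right]
  | cons a s ih =>
    rw [esymm_cons, esymm_one']
    simp only [Multiset.sum_cons, Multiset.map_cons]
    ring_nf
    ring_nf at ih
    linarith [ih]

lemma sum_shift (m : Multiset ℚ) : (m.map (· + 1)).sum = m.sum + Multiset.card m := by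
  induction m using Multiset.induction with
  | empty => simp
  | cons a s ih => simp [ih]; ring

lemma sum_sq_shift (m : Multiset ℚ) :
    (m.map (fun x => (x + 1) ^ 2)).sum = (m.map (· ^ 2)).sum + 2 * m.sum + Multiset.card m := by
  induction m using Multiset.induction with
  | empty => simp
  | cons a s ih => simp [ih]; ring

lemma esymm_two_shift (m : Multiset ℚ) :
    (m.map (· + 1)).esymm 2
      = m.esymm 2 + ((Multiset.card m : ℚ) - 1) * m.sum
        + (Multiset.card m : ℚ) * ((Multiset.card m : ℚ) - 1) / 2 := by
  have h2 : (2:ℚ) ≠ 0 := two_ne_zero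
  apply mul_left_cancel₀ h2
  rw [esymm_two, sum_shift, Multiset.map_map]
  have : ((fun x => x ^ 2) ∘ (· + 1)) = (fun x : ℚ => (x+1)^2) := by ext x; simp
  rw [this, sum_sq_shift]
  linear_combination (-1 : ℚ) * Multiset.esymm_two m
end Multiset

lemma nodal_coeff (s : Finset ℕ) (w : ℕ → ℚ) {k : ℕ} (hk : k ≤ s.card) :
    (Lagrange.nodal s w).coeff k
      = (-1) ^ (s.card - k) * (s.val.map w).esymm (s.card - k) := by
  rw [Lagrange.nodal_eq]
  have h1 : ∏ i ∈ s, (X - C (w i)) = ((s.val.map w).map (fun t => X - C t)).prod := by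
    rw [Finset.prod_eq_multiset_prod, Multiset.map_map]; rfl
  rw [h1]
  have hcard : Multiset.card (s.val.map w) = s.card := by simp
  rw [Multiset.prod_X_sub_C_coeff _ (by rwa [hcard]), hcard]

lemma key_identity (s : Finset ℕ) (v : ℕ → ℚ) (hv : Set.InjOn v s) :
    ∑ i ∈ s, v i * ∏ j ∈ s.erase i, ((v i - 1 - v j) / (v i - v j))
      = (∑ i ∈ s, v i) - (s.card : ℚ) * ((s.card : ℚ) - 1) / 2 := by
  rcases Nat.lt_or_ge s.card 2 with hr | hr
  · interval_cases h : s.card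
    · rw [Finset.card_eq_zero.mp h]; simp
    · obtain ⟨a, rfl⟩ := Finset.card_eq_one.mp h; simp
  · -- main case
    set r := s.card with hrdef
    set t : Multiset ℚ := s.val.map v with htdef
    have htc : Multiset.card t = r := by simp [htdef, hrdef]
    have hts : t.sum = ∑ i ∈ s, v i := rfl
    set Q := Lagrange.nodal s v with hQdef
    set P1 := Lagrange.nodal s (fun i => v i + 1) with hP1def
    have ht1 : s.val.map (fun i => v i + 1) = t.map (· + 1) := by
      rw [htdef, Multiset.map_map]; rfl
    have hQm : Q.Monic := Lagrange.nodal_monic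
    have hP1m : P1.Monic := Lagrange.nodal_monic
    have hQd : Q.natDegree = r := Lagrange.natDegree_nodal
    have hP1d : P1.natDegree = r := Lagrange.natDegree_nodal
    -- coefficient values
    have hQr : Q.coeff r = 1 := by rw [← hQd]; exact hQm.coeff_natDegree
    have hP1r : P1.coeff r = 1 := by rw [← hP1d]; exact hP1m.coeff_natDegree
    have hQr1 : Q.coeff (r - 1) = -t.sum := by
      rw [nodal_coeff s v (by omega : r - 1 ≤ s.card), ← hrdef, ← htdef]
      have : r - (r - 1) = 1 := by omega
      rw [this, Multiset.esymm_one']; ring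
    have hP1r1 : P1.coeff (r - 1) = -(t.sum + r) := by
      rw [nodal_coeff s (fun i => v i + 1) (by omega : r - 1 ≤ s.card), ← hrdef, ht1]
      have : r - (r - 1) = 1 := by omega
      rw [this, Multiset.esymm_one', Multiset.sum_shift, htc]; ring
    have hQr2 : Q.coeff (r - 2) = t.esymm 2 := by
      rw [nodal_coeff s v (by omega : r - 2 ≤ s.card), ← hrdef, ← htdef]
      have : r - (r - 2) = 2 := by omega
      rw [this]; ring
    have hP1r2 : P1.coeff (r - 2)
        = t.esymm 2 + ((r : ℚ) - 1) * t.sum + (r : ℚ) * ((r : ℚ) - 1) / 2 := by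
      rw [nodal_coeff s (fun i => v i + 1) (by omega : r - 2 ≤ s.card), ← hrdef, ht1]
      have : r - (r - 2) = 2 := by omega
      rw [this, Multiset.esymm_two_shift, htc]; ring
    have hQhi : ∀ m, r < m → Q.coeff m = 0 := fun m hm =>
      Polynomial.coeff_eq_zero_of_natDegree_lt (by omega)
    have hP1hi : ∀ m, r < m → P1.coeff m = 0 := fun m hm =>
      Polynomial.coeff_eq_zero_of_natDegree_lt (by omega)
    set f2 : ℚ[X] := X * P1 - Q * (X - C (r : ℚ)) with hf2def
    have hcoeff : ∀ m, f2.coeff m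
        = P1.coeff (m - 1) - (Q.coeff (m - 1) - (r : ℚ) * Q.coeff m) ∨ m = 0 := by
      intro m
      rcases Nat.eq_zero_or_pos m with h0 | h0
      · right; exact h0
      · left
        obtain ⟨k, rfl⟩ := Nat.exists_eq_succ_of_ne_zero (Nat.pos_iff_ne_zero.mp h0)
        have hexp : Q * (X - C (r : ℚ)) = Q * X - C (r : ℚ) * Q := by ring
        have hk : k + 1 - 1 = k := rfl
        rw [hk, hf2def, hexp, Polynomial.coeff_sub, Polynomial.coeff_sub,
          Polynomial.coeff_mul_X, Polynomial.coeff_X_mul, Polynomial.coeff_C_mul]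
    have hdeg : f2.degree < (r : WithBot ℕ) := by
      rw [Polynomial.degree_lt_iff_coeff_zero]
      intro m hm
      have hm' : r ≤ m := by exact_mod_cast hm
      rcases hcoeff m with h | h
      · rw [h]
        rcases eq_or_lt_of_le hm' with rfl | hlt
        · rw [hP1r1, hQr1, hQr]; ring
        · rcases Nat.eq_or_lt_of_le (Nat.succ_le_of_lt hlt) with h1 | h1
          · have : m - 1 = r := by omega
            rw [this, hP1r, hQr, hQhi m hlt]; ring
          · rw [hP1hi (m-1) (by omega), hQhi (m-1) (by omega), hQhi m hlt]; ring
      · omega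
    -- the top coefficient of f2
    have hf2c : f2.coeff (r - 1) = (r : ℚ) * ((r : ℚ) - 1) / 2 - t.sum := by
      rcases hcoeff (r - 1) with h | h
      · have e1 : r - 1 - 1 = r - 2 := by omega
        rw [h, e1, hP1r2, hQr2, hQr1]; ring
      · omega
    -- evaluations
    have heval : ∀ i ∈ s, f2.eval (v i)
        = -(v i * ∏ j ∈ s.erase i, (v i - 1 - v j)) := by
      intro i hi
      have hQ0 : Q.eval (v i) = 0 := Lagrange.eval_nodal_at_node hi
      have hP1e : P1.eval (v i) = ∏ j ∈ s, (v i - (v j + 1)) := by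
        rw [hP1def, Lagrange.eval_nodal]
      have hsplit : ∏ j ∈ s, (v i - (v j + 1))
          = (v i - (v i + 1)) * ∏ j ∈ s.erase i, (v i - (v j + 1)) :=
        (Finset.mul_prod_erase s _ hi).symm
      have hcongr : ∏ j ∈ s.erase i, (v i - (v j + 1))
          = ∏ j ∈ s.erase i, (v i - 1 - v j) :=
        Finset.prod_congr rfl fun j _ => by ring
      simp only [hf2def, Polynomial.eval_sub, Polynomial.eval_mul, Polynomial.eval_X,
        hQ0, hP1e, hsplit, hcongr]
      ring
    have hinterp := interp_coeff s v hv f2 hdeg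
    rw [hf2c] at hinterp
    have hsum : ∑ i ∈ s, f2.eval (v i) * ∏ j ∈ s.erase i, (v i - v j)⁻¹
        = -∑ i ∈ s, v i * ∏ j ∈ s.erase i, ((v i - 1 - v j) / (v i - v j)) := by
      rw [← Finset.sum_neg_distrib]
      refine Finset.sum_congr rfl fun i hi => ?_
      rw [heval i hi]
      rw [Finset.prod_div_distrib]
      have : ∏ j ∈ s.erase i, (v i - v j)⁻¹ = (∏ j ∈ s.erase i, (v i - v j))⁻¹ := by
        rw [← Finset.prod_inv_distrib]
      rw [this]
      field_simp
    rw [hsum] at hinterp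
    rw [← hts]
    linarith [hinterp]


namespace YoungHelp

lemma nat_eq_of_lt_iff {A B : ℕ} (h : ∀ l, l < A ↔ l < B) : A = B := by
  have h1 := h A; have h2 := h B; omega

lemma colLen_le_colLen_of_le {ν μ : YoungDiagram} (h : ∀ a : ℕ × ℕ, a ∈ ν → a ∈ μ) (j : ℕ) :
    ν.colLen j ≤ μ.colLen j := by
  rcases Nat.eq_zero_or_pos (ν.colLen j) with h0 | h0
  · omega
  · have : (ν.colLen j - 1, j) ∈ ν := by rw [YoungDiagram.mem_iff_lt_colLen]; omega
    have := h _ this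
    rw [YoungDiagram.mem_iff_lt_colLen] at this
    omega

lemma mem_iff (μ : YoungDiagram) (i j : ℕ) : (i, j) ∈ μ ↔ i < μ.colLen 0 ∧ j < μ.rowLen i := by
  constructor
  · intro h
    refine ⟨?_, YoungDiagram.mem_iff_lt_rowLen.mp h⟩
    have : (i, 0) ∈ μ := μ.up_left_mem le_rfl (Nat.zero_le _) h
    exact YoungDiagram.mem_iff_lt_colLen.mp this
  · rintro ⟨-, h2⟩
    exact YoungDiagram.mem_iff_lt_rowLen.mpr h2

lemma cells_eq_biUnion (μ : YoungDiagram) (r : ℕ) (hr : μ.colLen 0 ≤ r) :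
    μ.cells = (Finset.range r).biUnion fun i => {i} ×ˢ Finset.range (μ.rowLen i) := by
  ext ⟨i, j⟩
  simp only [Finset.mem_biUnion, Finset.mem_range, Finset.mem_product, Finset.mem_singleton,
    YoungDiagram.mem_cells, mem_iff]
  constructor
  · rintro ⟨h1, h2⟩; exact ⟨i, by omega, rfl, h2⟩
  · rintro ⟨a, ha, rfl, h2⟩
    have : i < μ.colLen 0 := by
      rw [← YoungDiagram.mem_iff_lt_colLen]
      exact μ.up_left_mem le_rfl (Nat.zero_le _) (YoungDiagram.mem_iff_lt_rowLen.mpr h2)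
    exact ⟨this, h2⟩

lemma prod_cells {M : Type*} [CommMonoid M] (μ : YoungDiagram) (r : ℕ) (hr : μ.colLen 0 ≤ r)
    (f : ℕ × ℕ → M) :
    ∏ c ∈ μ.cells, f c = ∏ i ∈ Finset.range r, ∏ j ∈ Finset.range (μ.rowLen i), f (i, j) := by
  rw [cells_eq_biUnion μ r hr, Finset.prod_biUnion]
  · refine Finset.prod_congr rfl fun i _ => ?_
    rw [Finset.prod_product]
    simp
  · intro a _ b _ hab
    simp only [Finset.disjoint_left]
    rintro ⟨x, y⟩ hx hy
    simp only [Finset.mem_product, Finset.mem_singleton] at hx hy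
    exact hab (hx.1 ▸ hy.1 ▸ rfl)

lemma card_eq_sum (μ : YoungDiagram) (r : ℕ) (hr : μ.colLen 0 ≤ r) :
    μ.card = ∑ i ∈ Finset.range r, μ.rowLen i := by
  have := prod_cells (M := Multiplicative ℕ) μ r hr (fun _ => Multiplicative.ofAdd 1)
  rw [Finset.prod_const] at this
  -- simpler: direct card computation
  classical
  rw [YoungDiagram.card, cells_eq_biUnion μ r hr, Finset.card_biUnion]
  · refine Finset.sum_congr rfl fun i _ => by simp
  · intro a _ b _ hab
    simp only [Finset.disjoint_left]
    rintro ⟨x, y⟩ hx hy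
    simp only [Finset.mem_product, Finset.mem_singleton] at hx hy
    exact hab (hx.1 ▸ hy.1 ▸ rfl)

/-- beta numbers -/
def xn (μ : YoungDiagram) (r i : ℕ) : ℕ := μ.rowLen i + (r - 1 - i)

lemma xn_anti (μ : YoungDiagram) (r : ℕ) {i k : ℕ} (hik : i < k) (hk : k < r) :
    xn μ r k < xn μ r i := by
  have := μ.rowLen_anti i k (le_of_lt hik)
  unfold xn; omega

lemma hook_pos (μ : YoungDiagram) {c : ℕ × ℕ} (hc : c ∈ μ) : 0 < hookLength μ c := by
  have h1 := YoungDiagram.mem_iff_lt_rowLen.mp hc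
  have h2 := YoungDiagram.mem_iff_lt_colLen.mp hc
  unfold hookLength; omega

lemma row_hook (μ : YoungDiagram) (r : ℕ) (hr : μ.colLen 0 ≤ r) (i : ℕ) (hi : i < r) :
    (∏ j ∈ Finset.range (μ.rowLen i), hookLength μ (i, j))
      * (∏ k ∈ Finset.Ico (i+1) r, (xn μ r i - xn μ r k)) = (xn μ r i).factorial := by
  classical
  set lam := μ.rowLen i with hlam
  set xi := xn μ r i with hxi
  -- the "co-hook" map on columns
  set g : ℕ → ℕ := fun j => j + (r - μ.colLen j) with hg
  have hcol_le : ∀ j, μ.colLen j ≤ r := fun j => le_trans (μ.colLen_anti 0 j (Nat.zero_le _)) hr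
  have hcol_gt : ∀ j, j < lam → i < μ.colLen j := by
    intro j hj
    rw [← YoungDiagram.mem_iff_lt_colLen]
    exact YoungDiagram.mem_iff_lt_rowLen.mpr (by omega)
  have hg_mono : ∀ j1 j2, j1 < j2 → g j1 < g j2 := by
    intro j1 j2 h
    have := μ.colLen_anti j1 j2 (le_of_lt h)
    have := hcol_le j1
    simp only [hg]; omega
  -- A and B
  set A : Finset ℕ := (Finset.range lam).image g with hA
  set B : Finset ℕ := (Finset.Ico (i+1) r).image (xn μ r) with hB
  have hAsub : A ⊆ Finset.range xi := by
    intro m hm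
    simp only [hA, Finset.mem_image, Finset.mem_range] at hm ⊢
    obtain ⟨j, hj, rfl⟩ := hm
    have := hcol_gt j hj
    have := hcol_le j
    simp only [hg, hxi, xn]; omega
  have hBsub : B ⊆ Finset.range xi := by
    intro m hm
    simp only [hB, Finset.mem_image, Finset.mem_range] at hm ⊢
    obtain ⟨k, hk, rfl⟩ := hm
    rw [Finset.mem_Ico] at hk
    exact xn_anti μ r (by omega) hk.2
  have hdisj : Disjoint A B := by
    rw [Finset.disjoint_left]
    rintro m hmA hmB
    simp only [hA, hB, Finset.mem_image, Finset.mem_range, Finset.mem_Ico] at hmA hmB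
    obtain ⟨j, hj, rfl⟩ := hmA
    obtain ⟨k, hk, hgj⟩ := hmB
    -- g j = xn μ r k is impossible
    rcases Nat.lt_or_ge j (μ.rowLen k) with hcase | hcase
    · -- (k, j) ∈ μ, so colLen j ≥ k+1
      have : k < μ.colLen j := by
        rw [← YoungDiagram.mem_iff_lt_colLen]
        exact YoungDiagram.mem_iff_lt_rowLen.mpr hcase
      have := hcol_le j
      simp only [hg, xn] at hgj
      omega
    · -- colLen j ≤ k
      have : μ.colLen j ≤ k := by
        by_contra hcon
        have : (k, j) ∈ μ := YoungDiagram.mem_iff_lt_colLen.mpr (by omega)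
        rw [YoungDiagram.mem_iff_lt_rowLen] at this
        omega
      simp only [hg, xn] at hgj
      omega
  have hcardA : A.card = lam := by
    rw [hA, Finset.card_image_of_injOn, Finset.card_range]
    intro a _ b _ hab
    rcases Nat.lt_trichotomy a b with h | h | h
    · exact absurd hab (Nat.ne_of_lt (hg_mono _ _ h))
    · exact h
    · exact absurd hab.symm (Nat.ne_of_lt (hg_mono _ _ h))
  have hcardB : B.card = r - (i+1) := by
    rw [hB, Finset.card_image_of_injOn, Nat.card_Ico]
    intro a ha b hb hab
    rw [Finset.coe_Ico, Set.mem_Ico] at ha hb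
    rcases Nat.lt_trichotomy a b with h | h | h
    · exact absurd hab.symm (Nat.ne_of_lt (xn_anti μ r h hb.2))
    · exact h
    · exact absurd hab (Nat.ne_of_lt (xn_anti μ r h ha.2))
  have hunion : A ∪ B = Finset.range xi := by
    apply Finset.eq_of_subset_of_card_le
    · exact Finset.union_subset hAsub hBsub
    · rw [Finset.card_union_of_disjoint hdisj, hcardA, hcardB, Finset.card_range]
      simp only [hxi, xn]; omega
  -- now the products
  have hfact : ∏ m ∈ Finset.range xi, (xi - m) = xi.factorial := by
    induction xi with
    | zero => simp
    | succ n ih =>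
      rw [Finset.prod_range_succ', Nat.factorial_succ]
      have : ∀ k ∈ Finset.range n, (n + 1 - (k + 1)) = n - k := fun k _ => by omega
      rw [Finset.prod_congr rfl this, ih, Nat.sub_zero, mul_comm]
  have hprodA : ∏ m ∈ A, (xi - m) = ∏ j ∈ Finset.range lam, hookLength μ (i, j) := by
    rw [hA, Finset.prod_image]
    · refine Finset.prod_congr rfl fun j hj => ?_
      rw [Finset.mem_range] at hj
      have h1 := hcol_gt j hj
      have h2 := hcol_le j
      simp only [hg, hxi, xn, hookLength]
      omega
    · intro a _ b _ hab
      rcases Nat.lt_trichotomy a b with h | h | h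
      · exact absurd hab (Nat.ne_of_lt (hg_mono _ _ h))
      · exact h
      · exact absurd hab.symm (Nat.ne_of_lt (hg_mono _ _ h))
  have hprodB : ∏ m ∈ B, (xi - m) = ∏ k ∈ Finset.Ico (i+1) r, (xi - xn μ r k) := by
    rw [hB, Finset.prod_image]
    intro a ha b hb hab
    rw [Finset.coe_Ico, Set.mem_Ico] at ha hb
    rcases Nat.lt_trichotomy a b with h | h | h
    · exact absurd hab.symm (Nat.ne_of_lt (xn_anti μ r h hb.2))
    · exact h
    · exact absurd hab (Nat.ne_of_lt (xn_anti μ r h ha.2))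
  calc (∏ j ∈ Finset.range lam, hookLength μ (i, j)) * ∏ k ∈ Finset.Ico (i+1) r, (xi - xn μ r k)
      = (∏ m ∈ A, (xi - m)) * ∏ m ∈ B, (xi - m) := by rw [hprodA, hprodB]
    _ = ∏ m ∈ A ∪ B, (xi - m) := (Finset.prod_union hdisj).symm
    _ = xi.factorial := by rw [hunion, hfact]

end YoungHelp

namespace YoungHelp
open Finset

noncomputable def xq (μ : YoungDiagram) (r : ℕ) (i : ℕ) : ℚ := ((xn μ r i : ℕ) : ℚ)

lemma xq_eq (μ : YoungDiagram) (r i : ℕ) (hi : i < r) :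
    xq μ r i = (μ.rowLen i : ℚ) + r - 1 - i := by
  unfold xq xn
  have h1 : (1:ℕ) ≤ r := by omega
  push_cast [Nat.sub_sub]
  rw [Nat.cast_sub (by omega)]
  push_cast
  ring

lemma xq_anti (μ : YoungDiagram) (r : ℕ) {i k : ℕ} (hik : i < k) (hk : k < r) :
    xq μ r k < xq μ r i := by
  unfold xq; exact_mod_cast xn_anti μ r hik hk

lemma xq_injOn (μ : YoungDiagram) (r : ℕ) : Set.InjOn (xq μ r) (Finset.range r) := by
  intro a ha b hb hab
  simp only [Finset.coe_range, Set.mem_Iio] at ha hb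
  rcases Nat.lt_trichotomy a b with h | h | h
  · exact absurd hab.symm (ne_of_lt (xq_anti μ r h hb))
  · exact h
  · exact absurd hab (ne_of_lt (xq_anti μ r h ha))

lemma hook_prod (μ : YoungDiagram) (r : ℕ) (hr : μ.colLen 0 ≤ r) :
    (∏ c ∈ μ.cells, (hookLength μ c : ℚ))
      * ∏ i ∈ range r, ∏ k ∈ Ico (i+1) r, (xq μ r i - xq μ r k)
    = ∏ i ∈ range r, ((xn μ r i).factorial : ℚ) := by
  rw [prod_cells μ r hr, ← Finset.prod_mul_distrib]
  refine Finset.prod_congr rfl fun i hi => ?_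
  rw [Finset.mem_range] at hi
  have hrow := row_hook μ r hr i hi
  have hcast : ∏ k ∈ Ico (i+1) r, (xq μ r i - xq μ r k)
      = ((∏ k ∈ Ico (i+1) r, (xn μ r i - xn μ r k) : ℕ) : ℚ) := by
    push_cast
    refine Finset.prod_congr rfl fun k hk => ?_
    rw [Finset.mem_Ico] at hk
    have := xn_anti μ r hk.1 hk.2
    rw [Nat.cast_sub (le_of_lt this)]
    rfl
  rw [hcast, ← Nat.cast_prod, ← Nat.cast_mul, hrow]

lemma prod_ite_i (r : ℕ) (w : ℕ → ℚ) (i : ℕ) (hi : i < r) :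
    ∏ a ∈ range r, ∏ b ∈ Ico (a+1) r, (if a = i ∨ b = i then (w a - w b) else 1)
      = (∏ a ∈ range i, (w a - w i)) * ∏ b ∈ Ico (i+1) r, (w i - w b) := by
  have hsplit : range r = range i ∪ Ico i r := by
    rw [range_eq_Ico, range_eq_Ico]
    exact (Finset.Ico_union_Ico_eq_Ico (Nat.zero_le i) (le_of_lt hi)).symm
  have hdisj : Disjoint (range i) (Ico i r) := by
    rw [range_eq_Ico]
    exact Finset.Ico_disjoint_Ico_consecutive 0 i r
  rw [hsplit, Finset.prod_union hdisj]
  have h1 : ∏ a ∈ range i, ∏ b ∈ Ico (a+1) r, (if a = i ∨ b = i then (w a - w b) else 1)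
      = ∏ a ∈ range i, (w a - w i) := by
    refine Finset.prod_congr rfl fun a ha => ?_
    rw [Finset.mem_range] at ha
    rw [Finset.prod_eq_single_of_mem i (Finset.mem_Ico.mpr ⟨by omega, hi⟩)]
    · simp
    · intro b hb hbne
      rw [Finset.mem_Ico] at hb
      rw [if_neg]
      push_neg
      exact ⟨by omega, hbne⟩
  have h2 : ∏ a ∈ Ico i r, ∏ b ∈ Ico (a+1) r, (if a = i ∨ b = i then (w a - w b) else 1)
      = ∏ b ∈ Ico (i+1) r, (w i - w b) := by
    rw [Finset.prod_eq_prod_Ico_succ_bot hi]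
    have hrest : ∏ a ∈ Ico (i+1) r, ∏ b ∈ Ico (a+1) r, (if a = i ∨ b = i then (w a - w b) else 1)
        = 1 := by
      apply Finset.prod_eq_one
      intro a ha
      apply Finset.prod_eq_one
      intro b hb
      rw [Finset.mem_Ico] at ha hb
      rw [if_neg]
      push_neg
      constructor <;> omega
    rw [hrest, mul_one]
    refine Finset.prod_congr rfl fun b hb => ?_
    rw [Finset.mem_Ico] at hb
    rw [if_pos (Or.inl rfl)]
  rw [h1, h2]

lemma vand_split (r : ℕ) (w : ℕ → ℚ) (i : ℕ) (hi : i < r) :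
    ∏ a ∈ range r, ∏ b ∈ Ico (a+1) r, (w a - w b)
      = ((∏ a ∈ range i, (w a - w i)) * ∏ b ∈ Ico (i+1) r, (w i - w b))
        * ∏ a ∈ range r, ∏ b ∈ Ico (a+1) r, (if a = i ∨ b = i then 1 else (w a - w b)) := by
  rw [← prod_ite_i r w i hi, ← Finset.prod_mul_distrib]
  refine Finset.prod_congr rfl fun a _ => ?_
  rw [← Finset.prod_mul_distrib]
  refine Finset.prod_congr rfl fun b _ => ?_
  by_cases h : a = i ∨ b = i
  · rw [if_pos h, if_pos h, mul_one]
  · rw [if_neg h, if_neg h, one_mul]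

end YoungHelp

namespace YoungHelp
open Finset

def corners (μ : YoungDiagram) : Finset (ℕ × ℕ) :=
  μ.cells.filter fun c => (c.1 + 1, c.2) ∉ μ ∧ (c.1, c.2 + 1) ∉ μ

lemma mem_corners {μ : YoungDiagram} {c : ℕ × ℕ} :
    c ∈ corners μ ↔ c ∈ μ ∧ (c.1 + 1, c.2) ∉ μ ∧ (c.1, c.2 + 1) ∉ μ := by
  simp [corners, Finset.mem_filter, YoungDiagram.mem_cells]

lemma corner_rowLen {μ : YoungDiagram} {c : ℕ × ℕ} (hc : c ∈ corners μ) :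
    μ.rowLen c.1 = c.2 + 1 := by
  rw [mem_corners] at hc
  obtain ⟨h1, -, h3⟩ := hc
  rw [YoungDiagram.mem_iff_lt_rowLen] at h1 h3
  omega

lemma isLowerSet_erase (μ : YoungDiagram) (c : ℕ × ℕ) (hc : c ∈ corners μ) :
    IsLowerSet (↑(μ.cells.erase c) : Set (ℕ × ℕ)) := by
  rw [mem_corners] at hc
  intro b a hab hb
  simp only [Finset.coe_erase, Set.mem_diff, Finset.mem_coe, YoungDiagram.mem_cells,
    Set.mem_singleton_iff] at hb ⊢
  obtain ⟨hbmem, hbne⟩ := hb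
  constructor
  · exact μ.isLowerSet hab hbmem
  · intro haeq
    obtain ⟨h1, h2⟩ : a.1 ≤ b.1 ∧ a.2 ≤ b.2 := ⟨hab.1, hab.2⟩
    rw [haeq] at h1 h2
    rcases Nat.lt_or_ge c.1 b.1 with h | h
    · refine hc.2.1 (μ.up_left_mem (by omega) h2 (show (b.1, b.2) ∈ μ from hbmem))
    · rcases Nat.lt_or_ge c.2 b.2 with h' | h'
      · exact hc.2.2 (μ.up_left_mem (by omega) (by omega) (show (b.1, b.2) ∈ μ from hbmem))
      · exact hbne (Prod.ext (by omega) (by omega)).symm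

def eraseCorner (μ : YoungDiagram) (c : ℕ × ℕ) : YoungDiagram :=
  if hc : c ∈ corners μ then ⟨μ.cells.erase c, isLowerSet_erase μ c hc⟩ else μ

lemma mem_eraseCorner {μ : YoungDiagram} {c : ℕ × ℕ} (hc : c ∈ corners μ) (a : ℕ × ℕ) :
    a ∈ eraseCorner μ c ↔ a ∈ μ ∧ a ≠ c := by
  rw [eraseCorner, dif_pos hc]
  show a ∈ Finset.erase _ _ ↔ _
  rw [Finset.mem_erase, YoungDiagram.mem_cells]
  tauto

lemma card_eraseCorner {μ : YoungDiagram} {c : ℕ × ℕ} (hc : c ∈ corners μ) :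
    (eraseCorner μ c).card = μ.card - 1 := by
  rw [eraseCorner, dif_pos hc]
  show (Finset.erase _ _).card = _
  rw [Finset.card_erase_of_mem]
  exact (mem_corners.mp hc).1

lemma rowLen_eraseCorner_ne {μ : YoungDiagram} {c : ℕ × ℕ} (hc : c ∈ corners μ) {k : ℕ}
    (hk : k ≠ c.1) : (eraseCorner μ c).rowLen k = μ.rowLen k := by
  apply nat_eq_of_lt_iff
  intro l
  rw [← YoungDiagram.mem_iff_lt_rowLen, ← YoungDiagram.mem_iff_lt_rowLen,
    mem_eraseCorner hc]
  have : (k, l) ≠ c := fun h => hk (by rw [← h])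
  tauto

lemma rowLen_eraseCorner_eq {μ : YoungDiagram} {c : ℕ × ℕ} (hc : c ∈ corners μ) :
    (eraseCorner μ c).rowLen c.1 = c.2 := by
  have hrl := corner_rowLen hc
  apply nat_eq_of_lt_iff
  intro l
  rw [← YoungDiagram.mem_iff_lt_rowLen, mem_eraseCorner hc]
  rw [show ((c.1, l) : ℕ × ℕ) ≠ c ↔ l ≠ c.2 by
    constructor
    · intro h hl; exact h (Prod.ext rfl hl)
    · intro h hl; exact h (congrArg Prod.snd hl)]
  rw [YoungDiagram.mem_iff_lt_rowLen, hrl]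
  omega

lemma colLen_eraseCorner_le {μ : YoungDiagram} {c : ℕ × ℕ} (hc : c ∈ corners μ) (j : ℕ) :
    (eraseCorner μ c).colLen j ≤ μ.colLen j := by
  apply colLen_le_colLen_of_le
  intro a ha
  exact ((mem_eraseCorner hc a).mp ha).1

lemma corners_eq_image (μ : YoungDiagram) (r : ℕ) (hr : μ.colLen 0 = r) :
    corners μ = ((range r).filter fun i => μ.rowLen (i+1) < μ.rowLen i).image
      (fun i => (i, μ.rowLen i - 1)) := by
  ext ⟨i, j⟩
  simp only [Finset.mem_image, Finset.mem_filter, Finset.mem_range]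
  constructor
  · intro hc
    have hrl := corner_rowLen hc
    simp only at hrl
    rw [mem_corners] at hc
    obtain ⟨h1, h2, -⟩ := hc
    simp only at h1 h2
    rw [YoungDiagram.mem_iff_lt_rowLen] at h2
    refine ⟨i, ⟨?_, by omega⟩, by rw [hrl]; norm_num⟩
    rw [← hr, ← YoungDiagram.mem_iff_lt_colLen]
    exact μ.up_left_mem le_rfl (Nat.zero_le _) h1
  · rintro ⟨a, ⟨ha1, ha2⟩, heq⟩
    have heq1 : a = i := congrArg Prod.fst heq
    have heq2 : μ.rowLen a - 1 = j := congrArg Prod.snd heq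
    subst heq1
    have hpos : 0 < μ.rowLen a := by omega
    rw [mem_corners]
    refine ⟨?_, ?_, ?_⟩
    · show (a, j) ∈ μ
      rw [YoungDiagram.mem_iff_lt_rowLen]; omega
    · show (a + 1, j) ∈ μ → False
      rw [YoungDiagram.mem_iff_lt_rowLen]; omega
    · show (a, j + 1) ∈ μ → False
      rw [YoungDiagram.mem_iff_lt_rowLen]; omega

end YoungHelp

namespace YoungHelp
open Finset

lemma erase_range_split {M : Type*} [CommMonoid M] (r i : ℕ) (hi : i < r) (f : ℕ → M) :
    ∏ j ∈ (range r).erase i, f j = (∏ j ∈ range i, f j) * ∏ j ∈ Ico (i+1) r, f j := by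
  have hs : (range r).erase i = range i ∪ Ico (i+1) r := by
    ext a
    simp only [mem_erase, mem_range, mem_union, mem_Ico]
    omega
  rw [hs, Finset.prod_union]
  rw [Finset.disjoint_left]
  intro a ha hb
  rw [mem_range] at ha
  rw [mem_Ico] at hb
  omega

lemma vand_relation (r : ℕ) (v v' : ℕ → ℚ) (i : ℕ) (hi : i < r)
    (hvv' : ∀ k, k ≠ i → v' k = v k) (hvi : v' i = v i - 1) :
    (∏ a ∈ range r, ∏ b ∈ Ico (a+1) r, (v' a - v' b)) * (∏ j ∈ (range r).erase i, (v i - v j))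
      = (∏ a ∈ range r, ∏ b ∈ Ico (a+1) r, (v a - v b))
        * (∏ j ∈ (range r).erase i, (v i - 1 - v j)) := by
  rw [vand_split r v i hi, vand_split r v' i hi]
  have hU : (∏ a ∈ range r, ∏ b ∈ Ico (a+1) r, (if a = i ∨ b = i then 1 else (v' a - v' b)))
      = ∏ a ∈ range r, ∏ b ∈ Ico (a+1) r, (if a = i ∨ b = i then 1 else (v a - v b)) := by
    refine Finset.prod_congr rfl fun a _ => Finset.prod_congr rfl fun b _ => ?_
    by_cases h : a = i ∨ b = i
    · rw [if_pos h, if_pos h]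
    · push_neg at h
      rw [if_neg (by tauto), if_neg (by tauto), hvv' a h.1, hvv' b h.2]
  rw [hU]
  rw [erase_range_split r i hi, erase_range_split r i hi]
  have e1 : ∏ a ∈ range i, (v' a - v' i) = ∏ a ∈ range i, (v a - (v i - 1)) := by
    refine Finset.prod_congr rfl fun a ha => ?_
    rw [mem_range] at ha
    rw [hvv' a (by omega), hvi]
  have e2 : ∏ b ∈ Ico (i+1) r, (v' i - v' b) = ∏ b ∈ Ico (i+1) r, ((v i - 1) - v b) := by
    refine Finset.prod_congr rfl fun b hb => ?_
    rw [mem_Ico] at hb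
    rw [hvv' b (by omega), hvi]
  rw [e1, e2]
  have key : (∏ a ∈ range i, (v a - (v i - 1))) * (∏ a ∈ range i, (v i - v a))
      = (∏ a ∈ range i, (v a - v i)) * (∏ a ∈ range i, (v i - 1 - v a)) := by
    rw [← Finset.prod_mul_distrib, ← Finset.prod_mul_distrib]
    exact Finset.prod_congr rfl fun a _ => by ring
  linear_combination (∏ b ∈ Ico (i+1) r, ((v i - 1) - v b)) * (∏ b ∈ Ico (i+1) r, (v i - v b)) *
    (∏ a ∈ range r, ∏ b ∈ Ico (a+1) r, (if a = i ∨ b = i then 1 else (v a - v b))) * key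

lemma hooks_ne_zero (μ : YoungDiagram) : (∏ c ∈ μ.cells, (hookLength μ c : ℚ)) ≠ 0 := by
  rw [Finset.prod_ne_zero_iff]
  intro c hc
  have := hook_pos μ (YoungDiagram.mem_cells _ |>.mp hc)
  positivity

lemma colLen_pos (μ : YoungDiagram) (hn : 0 < μ.card) : 0 < μ.colLen 0 := by
  obtain ⟨c, hc⟩ := Finset.card_pos.mp hn
  rw [YoungDiagram.mem_cells] at hc
  rw [← YoungDiagram.mem_iff_lt_colLen]
  exact μ.up_left_mem (Nat.zero_le _) (Nat.zero_le _) hc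

end YoungHelp

namespace YoungHelp
open Finset

lemma rec_q (μ : YoungDiagram) (hn : 0 < μ.card) :
    (μ.card.factorial : ℚ) / (∏ c ∈ μ.cells, (hookLength μ c : ℚ))
      = ∑ c ∈ corners μ, (((μ.card - 1).factorial : ℚ)
          / ∏ a ∈ (eraseCorner μ c).cells, (hookLength (eraseCorner μ c) a : ℚ)) := by
  classical
  set r := μ.colLen 0 with hrdef
  have hr1 : 0 < r := colLen_pos μ hn
  set v := xq μ r with hvdef
  set H := ∏ c ∈ μ.cells, (hookLength μ c : ℚ) with hHdef
  have hH : H ≠ 0 := hooks_ne_zero μ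
  set CR := (range r).filter (fun i => μ.rowLen (i+1) < μ.rowLen i) with hCRdef
  have hrow_pos : ∀ i, i < r → 0 < μ.rowLen i := by
    intro i hi
    rw [← YoungDiagram.mem_iff_lt_rowLen (j := 0)]
    exact YoungDiagram.mem_iff_lt_colLen.mpr hi
  have hrow_r : μ.rowLen r = 0 := by
    by_contra h
    have : (r, 0) ∈ μ := YoungDiagram.mem_iff_lt_rowLen.mpr (by omega)
    rw [YoungDiagram.mem_iff_lt_colLen] at this
    omega
  -- the KEY identity
  have hkey := key_identity (range r) v (xq_injOn μ r)
  rw [Finset.card_range] at hkey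
  have hsumv : ∑ i ∈ range r, v i = (μ.card : ℚ) + (r : ℚ) * ((r:ℚ) - 1) / 2 := by
    have h1 : ∀ i ∈ range r, v i = (μ.rowLen i : ℚ) + ((r:ℚ) - 1 - (i:ℚ)) := by
      intro i hi; rw [mem_range] at hi; rw [hvdef, xq_eq μ r i hi]; ring
    rw [Finset.sum_congr rfl h1, Finset.sum_add_distrib]
    have hg : (∑ i ∈ range r, (i:ℚ)) = (r:ℚ)*((r:ℚ)-1)/2 := by
      have h := Finset.sum_range_id_mul_two r
      have h2 : ((((∑ i ∈ range r, i) * 2 : ℕ)) : ℚ) = ((r * (r-1) : ℕ) : ℚ) := by rw [h]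
      push_cast [Nat.cast_sub (show 1 ≤ r by omega)] at h2
      linarith
    have hcard : ((μ.card : ℕ) : ℚ) = ∑ i ∈ range r, (μ.rowLen i : ℚ) := by
      rw [card_eq_sum μ r le_rfl]; push_cast; rfl
    rw [Finset.sum_sub_distrib, Finset.sum_sub_distrib, hg, ← hcard]
    simp only [Finset.sum_const, Finset.card_range, nsmul_eq_mul, mul_one]
    ring
  -- restrict the key sum to corner rows
  have hzero : ∀ i ∈ range r, i ∉ CR →
      v i * ∏ j ∈ (range r).erase i, ((v i - 1 - v j) / (v i - v j)) = 0 := by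
    intro i hir hiCR
    rw [mem_range] at hir
    rw [hCRdef, Finset.mem_filter] at hiCR
    push_neg at hiCR
    have hle := hiCR (by rwa [mem_range])
    have heq : μ.rowLen (i+1) = μ.rowLen i := le_antisymm (μ.rowLen_anti i (i+1) (by omega)) hle
    have hi1r : i + 1 < r := by
      rcases Nat.lt_or_ge (i+1) r with h | h
      · exact h
      · exfalso
        have he : i + 1 = r := by omega
        have hp := hrow_pos i hir
        rw [he, hrow_r] at heq
        omega
    have hmem : i + 1 ∈ (range r).erase i := by
      rw [Finset.mem_erase, mem_range]; exact ⟨by omega, hi1r⟩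
    rw [Finset.prod_eq_zero hmem, mul_zero]
    have h1 : v i - 1 - v (i+1) = 0 := by
      rw [hvdef, xq_eq μ r i hir, xq_eq μ r (i+1) hi1r, heq]
      push_cast
      ring
    rw [h1, zero_div]
  have hsumCR : ∑ i ∈ CR, (v i * ∏ j ∈ (range r).erase i, ((v i - 1 - v j) / (v i - v j)))
      = (μ.card : ℚ) := by
    rw [Finset.sum_subset (Finset.filter_subset _ _) hzero]
    rw [hkey, hsumv]; ring
  -- rewrite the corner sum as a sum over corner rows
  rw [corners_eq_image μ r rfl, Finset.sum_image (by
    intro x _ y _ hxy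
    exact congrArg Prod.fst hxy)]
  -- per-term identity
  have hterm : ∀ i ∈ CR,
      (((μ.card - 1).factorial : ℚ)
        / ∏ a ∈ (eraseCorner μ (i, μ.rowLen i - 1)).cells,
            (hookLength (eraseCorner μ (i, μ.rowLen i - 1)) a : ℚ))
      = ((μ.card - 1).factorial : ℚ) / H
          * (v i * ∏ j ∈ (range r).erase i, ((v i - 1 - v j) / (v i - v j))) := by
    intro i hiCR
    rw [hCRdef, Finset.mem_filter, mem_range] at hiCR
    obtain ⟨hir, hlt⟩ := hiCR
    have hpos : 0 < μ.rowLen i := hrow_pos i hir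
    -- the corner
    have hc : (i, μ.rowLen i - 1) ∈ corners μ := by
      rw [mem_corners]
      refine ⟨?_, ?_, ?_⟩
      · show (i, μ.rowLen i - 1) ∈ μ
        rw [YoungDiagram.mem_iff_lt_rowLen]; omega
      · show ¬ (i + 1, μ.rowLen i - 1) ∈ μ
        rw [YoungDiagram.mem_iff_lt_rowLen]; omega
      · show ¬ (i, μ.rowLen i - 1 + 1) ∈ μ
        rw [YoungDiagram.mem_iff_lt_rowLen]; omega
    set ν := eraseCorner μ (i, μ.rowLen i - 1) with hνdef
    have hν_rowi : ν.rowLen i = μ.rowLen i - 1 := rowLen_eraseCorner_eq hc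
    have hν_rowne : ∀ k, k ≠ i → ν.rowLen k = μ.rowLen k := fun k hk =>
      rowLen_eraseCorner_ne hc hk
    have hν_col : ν.colLen 0 ≤ r := colLen_eraseCorner_le hc 0
    set H' := ∏ a ∈ ν.cells, (hookLength ν a : ℚ) with hH'def
    have hH' : H' ≠ 0 := hooks_ne_zero ν
    set V := ∏ a ∈ range r, ∏ b ∈ Ico (a+1) r, (v a - v b) with hVdef
    set V' := ∏ a ∈ range r, ∏ b ∈ Ico (a+1) r, (xq ν r a - xq ν r b) with hV'def
    set F := ∏ k ∈ range r, ((xn μ r k).factorial : ℚ) with hFdef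
    set F' := ∏ k ∈ range r, ((xn ν r k).factorial : ℚ) with hF'def
    set N := ∏ j ∈ (range r).erase i, (v i - 1 - v j) with hNdef
    set D := ∏ j ∈ (range r).erase i, (v i - v j) with hDdef
    have hHP : H * V = F := hook_prod μ r le_rfl
    have hHP' : H' * V' = F' := hook_prod ν r hν_col
    have hF : F ≠ 0 := by
      rw [hFdef, Finset.prod_ne_zero_iff]
      intro k _
      exact_mod_cast Nat.factorial_ne_zero _
    have hF' : F' ≠ 0 := by
      rw [hF'def, Finset.prod_ne_zero_iff]
      intro k _
      exact_mod_cast Nat.factorial_ne_zero _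
    have hV : V ≠ 0 := fun h0 => hF (by rw [← hHP, h0, mul_zero])
    have hV' : V' ≠ 0 := fun h0 => hF' (by rw [← hHP', h0, mul_zero])
    have hD : D ≠ 0 := by
      rw [hDdef, Finset.prod_ne_zero_iff]
      intro j hj
      rw [Finset.mem_erase, mem_range] at hj
      refine sub_ne_zero_of_ne fun hvij => hj.1 ?_
      exact (xq_injOn μ r (by simp [mem_range]; omega) (by simp [mem_range, hir]) hvij.symm)
    -- v' relations
    have hv'ne : ∀ k, k ≠ i → xq ν r k = v k := by
      intro k hk
      rw [hvdef]
      unfold xq xn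
      rw [hν_rowne k hk]
    have hxn_i : xn ν r i + 1 = xn μ r i := by
      unfold xn
      rw [hν_rowi]
      omega
    have hv'i : xq ν r i = v i - 1 := by
      rw [hvdef]
      unfold xq
      rw [← hxn_i]
      push_cast
      ring
    have hVN : V' * D = V * N := vand_relation r v (xq ν r) i hir hv'ne hv'i
    have hvi_eq : v i = ((xn μ r i : ℕ) : ℚ) := rfl
    have hFF' : F = v i * F' := by
      rw [hFdef, hF'def, ← Finset.mul_prod_erase _ _ (mem_range.mpr hir),
        ← Finset.mul_prod_erase _ _ (mem_range.mpr hir)]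
      have hrest : ∏ k ∈ (range r).erase i, ((xn μ r k).factorial : ℚ)
          = ∏ k ∈ (range r).erase i, ((xn ν r k).factorial : ℚ) := by
        refine Finset.prod_congr rfl fun k hk => ?_
        rw [Finset.mem_erase] at hk
        unfold xn
        rw [hν_rowne k hk.1]
      rw [hrest]
      have hfac : ((xn μ r i).factorial : ℚ) = v i * ((xn ν r i).factorial : ℚ) := by
        rw [hvi_eq, ← hxn_i]
        rw [Nat.factorial_succ]
        push_cast
        ring
      rw [hfac, mul_assoc]
    have hvi0 : v i ≠ 0 := by
      rw [hvi_eq]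
      have : 0 < xn μ r i := by unfold xn; omega
      positivity
    -- the scalar identity H * D = v i * (N * H')
    have h6 : V * V' * (H * D) = V * V' * (v i * (N * H')) := by
      calc V * V' * (H * D) = (H * V) * (V' * D) := by ring
        _ = F * (V * N) := by rw [hHP, hVN]
        _ = (v i * F') * (V * N) := by rw [hFF']
        _ = (v i * (H' * V')) * (V * N) := by rw [hHP']
        _ = V * V' * (v i * (N * H')) := by ring
    have hHD : H * D = v i * (N * H') := mul_left_cancel₀ (mul_ne_zero hV hV') h6
    -- conclude
    have hprodsplit : ∏ j ∈ (range r).erase i, ((v i - 1 - v j) / (v i - v j)) = N / D := by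
      rw [hNdef, hDdef, Finset.prod_div_distrib]
    rw [hprodsplit]
    field_simp
    linear_combination hHD
  rw [Finset.sum_congr rfl hterm, ← Finset.mul_sum, hsumCR]
  have hfac : (μ.card.factorial : ℚ) = (μ.card : ℚ) * ((μ.card - 1).factorial : ℚ) := by
    exact_mod_cast congrArg (Nat.cast (R := ℚ)) (Nat.mul_factorial_pred hn.ne').symm
  rw [hfac]
  ring

end YoungHelp


namespace YoungHelp
open Finset

lemma SYT.ext' {μ : YoungDiagram} {T1 T2 : SYT μ} (h : T1.entry = T2.entry) : T1 = T2 := by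
  cases T1; cases T2; cases h; rfl

lemma syt_mem_Icc {μ : YoungDiagram} (T : SYT μ) {p : ℕ × ℕ} (hp : p ∈ μ) :
    T.entry p.1 p.2 ∈ Set.Icc 1 μ.card :=
  T.bijOn.mapsTo (by simpa using hp)

instance sytFinite (μ : YoungDiagram) : Finite (SYT μ) := by
  classical
  let f : SYT μ → (↑μ.cells → Set.Icc 1 μ.card) := fun T c =>
    ⟨T.entry c.1.1 c.1.2, syt_mem_Icc T (YoungDiagram.mem_cells _ |>.mp c.2)⟩
  have hinj : Function.Injective f := by
    intro T1 T2 h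
    apply SYT.ext'
    funext i j
    by_cases hm : (i, j) ∈ μ
    · have := congrFun h ⟨(i, j), (YoungDiagram.mem_cells _).mpr hm⟩
      exact congrArg Subtype.val this
    · rw [T1.zero_outside i j hm, T2.zero_outside i j hm]
  exact Finite.of_injective f hinj

lemma syt_card_bot (μ : YoungDiagram) (h : μ.card = 0) : Nat.card (SYT μ) = 1 := by
  have hcells : μ.cells = ∅ := Finset.card_eq_zero.mp h
  have hnomem : ∀ p : ℕ × ℕ, p ∉ μ := by
    intro p hp
    rw [← YoungDiagram.mem_cells, hcells] at hp
    exact absurd hp (Finset.notMem_empty p)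
  have hbij : Set.BijOn (fun c : ℕ × ℕ => (0:ℕ)) ↑μ.cells (Set.Icc 1 μ.card) := by
    rw [hcells, h]
    have : Set.Icc 1 0 = (∅ : Set ℕ) := Set.Icc_eq_empty (by omega)
    rw [this]
    simpa using Set.bijOn_empty _
  let T0 : SYT μ :=
    { entry := fun _ _ => 0
      bijOn := hbij
      row_strict := fun i j1 j2 _ h2 => absurd h2 (hnomem _)
      col_strict := fun i1 i2 j _ h2 => absurd h2 (hnomem _)
      zero_outside := fun _ _ _ => rfl }
  have huniq : ∀ T : SYT μ, T = T0 := by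
    intro T
    apply SYT.ext'
    funext i j
    exact T.zero_outside i j (hnomem _)
  have : Unique (SYT μ) := ⟨⟨T0⟩, huniq⟩
  exact Nat.card_unique

/-- glue the maximal entry back -/
noncomputable def glue {μ : YoungDiagram} {c : ℕ × ℕ} (hc : c ∈ corners μ) (hn : 0 < μ.card)
    (T : SYT (eraseCorner μ c)) : SYT μ where
  entry i j := if (i, j) = c then μ.card else T.entry i j
  bijOn := by
    have hmemc := (mem_corners.mp hc).1
    have hecard := card_eraseCorner hc
    have hTmem : ∀ p : ℕ × ℕ, p ∈ eraseCorner μ c → T.entry p.1 p.2 ∈ Set.Icc 1 (μ.card - 1) := by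
      intro p hp
      have := syt_mem_Icc T hp
      rwa [hecard] at this
    constructor
    · -- MapsTo
      rintro ⟨i, j⟩ hp
      simp only [Finset.mem_coe, YoungDiagram.mem_cells] at hp
      by_cases he : ((i, j) : ℕ × ℕ) = c
      · simp only [he, if_pos rfl]
        exact ⟨hn, le_rfl⟩
      · simp only [if_neg he]
        have := hTmem (i, j) ((mem_eraseCorner hc _).mpr ⟨hp, he⟩)
        simp only [Set.mem_Icc] at this ⊢
        omega
    constructor
    · -- InjOn
      rintro ⟨i, j⟩ hp ⟨i', j'⟩ hq hval
      simp only [Finset.mem_coe, YoungDiagram.mem_cells] at hp hq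
      simp only at hval
      by_cases he : ((i, j) : ℕ × ℕ) = c <;> by_cases he' : ((i', j') : ℕ × ℕ) = c
      · rw [he, he']
      · rw [if_pos he, if_neg he'] at hval
        have := hTmem (i', j') ((mem_eraseCorner hc _).mpr ⟨hq, he'⟩)
        simp only [Set.mem_Icc] at this
        omega
      · rw [if_neg he, if_pos he'] at hval
        have := hTmem (i, j) ((mem_eraseCorner hc _).mpr ⟨hp, he⟩)
        simp only [Set.mem_Icc] at this
        omega
      · rw [if_neg he, if_neg he'] at hval
        exact T.bijOn.injOn
          (by simpa using (mem_eraseCorner hc ((i, j))).mpr ⟨hp, he⟩)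
          (by simpa using (mem_eraseCorner hc ((i', j'))).mpr ⟨hq, he'⟩) hval
    · -- SurjOn
      intro m hm
      simp only [Set.mem_Icc] at hm
      by_cases hmn : m = μ.card
      · refine ⟨c, by simpa using hmemc, ?_⟩
        simp [hmn]
      · have : m ∈ Set.Icc 1 ((eraseCorner μ c).card) := by
          rw [hecard]; simp only [Set.mem_Icc]; omega
        obtain ⟨p, hpmem, hpval⟩ := T.bijOn.surjOn this
        simp only [Finset.mem_coe, YoungDiagram.mem_cells] at hpmem
        have hpμ := ((mem_eraseCorner hc p).mp hpmem).1
        have hpne := ((mem_eraseCorner hc p).mp hpmem).2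
        refine ⟨p, by simpa using hpμ, ?_⟩
        simp only [Prod.mk.eta, if_neg hpne]
        exact hpval
  row_strict := by
    intro i j1 j2 hj h2
    have hmemc := (mem_corners.mp hc).1
    have hecard := card_eraseCorner hc
    by_cases he2 : ((i, j2) : ℕ × ℕ) = c
    · rw [if_pos he2]
      have hne1 : ((i, j1) : ℕ × ℕ) ≠ c := by
        intro h
        rw [← he2] at h
        have := congrArg Prod.snd h
        simp only at this
        omega
      rw [if_neg hne1]
      by_cases hm : ((i, j1) : ℕ × ℕ) ∈ eraseCorner μ c
      · have := syt_mem_Icc T hm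
        rw [hecard] at this
        simp only [Set.mem_Icc] at this
        omega
      · rw [T.zero_outside i j1 hm]
        omega
    · have h2' : ((i, j2) : ℕ × ℕ) ∈ eraseCorner μ c := (mem_eraseCorner hc _).mpr ⟨h2, he2⟩
      have hne1 : ((i, j1) : ℕ × ℕ) ≠ c := by
        intro h
        have h1 := congrArg Prod.fst h
        have hsnd := congrArg Prod.snd h
        simp only at h1 hsnd
        -- c = (i, j1), j1 < j2, (i,j2) ∈ μ ⇒ (c.1, c.2+1) ∈ μ, contradiction
        apply (mem_corners.mp hc).2.2
        rw [← h1, ← hsnd]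
        exact μ.up_left_mem le_rfl (by omega) h2
      rw [if_neg hne1, if_neg he2]
      exact T.row_strict i j1 j2 hj h2'
  col_strict := by
    intro i1 i2 j hi h2
    have hmemc := (mem_corners.mp hc).1
    have hecard := card_eraseCorner hc
    by_cases he2 : ((i2, j) : ℕ × ℕ) = c
    · rw [if_pos he2]
      have hne1 : ((i1, j) : ℕ × ℕ) ≠ c := by
        intro h
        rw [← he2] at h
        have := congrArg Prod.fst h
        simp only at this
        omega
      rw [if_neg hne1]
      by_cases hm : ((i1, j) : ℕ × ℕ) ∈ eraseCorner μ c
      · have := syt_mem_Icc T hm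
        rw [hecard] at this
        simp only [Set.mem_Icc] at this
        omega
      · rw [T.zero_outside i1 j hm]
        omega
    · have h2' : ((i2, j) : ℕ × ℕ) ∈ eraseCorner μ c := (mem_eraseCorner hc _).mpr ⟨h2, he2⟩
      have hne1 : ((i1, j) : ℕ × ℕ) ≠ c := by
        intro h
        have h1 := congrArg Prod.fst h
        have hsnd := congrArg Prod.snd h
        simp only at h1 hsnd
        apply (mem_corners.mp hc).2.1
        rw [← h1, ← hsnd]
        exact μ.up_left_mem (by omega) le_rfl h2
      rw [if_neg hne1, if_neg he2]
      exact T.col_strict i1 i2 j hi h2'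
  zero_outside := by
    intro i j hm
    have hmemc := (mem_corners.mp hc).1
    have hne : ((i, j) : ℕ × ℕ) ≠ c := by
      intro h
      rw [h] at hm
      exact hm hmemc
    rw [if_neg hne]
    apply T.zero_outside
    intro hmem
    exact hm ((mem_eraseCorner hc _).mp hmem).1

end YoungHelp

namespace YoungHelp
open Finset

/-- remove the maximal entry -/
noncomputable def cut {μ : YoungDiagram} {c : ℕ × ℕ} (hc : c ∈ corners μ) (T : SYT μ)
    (hmax : T.entry c.1 c.2 = μ.card) : SYT (eraseCorner μ c) where
  entry i j := if (i, j) = c then 0 else T.entry i j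
  bijOn := by
    have hmemc := (mem_corners.mp hc).1
    have hecard := card_eraseCorner hc
    have hn : 0 < μ.card := Finset.card_pos.mpr ⟨c, (YoungDiagram.mem_cells _).mpr hmemc⟩
    have hinj := T.bijOn.injOn
    rw [hecard]
    constructor
    · -- MapsTo
      rintro ⟨i, j⟩ hp
      simp only [Finset.mem_coe, YoungDiagram.mem_cells] at hp
      have hpμ := ((mem_eraseCorner hc _).mp hp).1
      have hpne := ((mem_eraseCorner hc _).mp hp).2
      simp only [if_neg hpne]
      have hval := syt_mem_Icc T hpμ
      simp only [Set.mem_Icc] at hval ⊢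
      have hvne : T.entry i j ≠ μ.card := by
        intro h
        apply hpne
        apply hinj (by simpa using hpμ) (by simpa using hmemc)
        simp only
        rw [h, hmax]
      omega
    constructor
    · -- InjOn
      rintro ⟨i, j⟩ hp ⟨i', j'⟩ hq hval
      simp only [Finset.mem_coe, YoungDiagram.mem_cells] at hp hq
      have hpne := ((mem_eraseCorner hc _).mp hp).2
      have hqne := ((mem_eraseCorner hc _).mp hq).2
      have hpμ := ((mem_eraseCorner hc _).mp hp).1
      have hqμ := ((mem_eraseCorner hc _).mp hq).1
      simp only [if_neg hpne, if_neg hqne] at hval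
      exact hinj (by simpa using hpμ) (by simpa using hqμ) hval
    · -- SurjOn
      intro m hm
      simp only [Set.mem_Icc] at hm
      have hm' : m ∈ Set.Icc 1 μ.card := by simp only [Set.mem_Icc]; omega
      obtain ⟨p, hpmem, hpval⟩ := T.bijOn.surjOn hm'
      simp only [Finset.mem_coe, YoungDiagram.mem_cells] at hpmem
      have hpne : p ≠ c := by
        intro h
        rw [h] at hpval
        simp only at hpval
        rw [hmax] at hpval
        omega
      refine ⟨p, by simpa using (mem_eraseCorner hc p).mpr ⟨hpmem, hpne⟩, ?_⟩
      simp only [Prod.mk.eta, if_neg hpne]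
      exact hpval
  row_strict := by
    intro i j1 j2 hj h2
    have h2' := ((mem_eraseCorner hc _).mp h2).1
    have h2ne := ((mem_eraseCorner hc _).mp h2).2
    have hne1 : ((i, j1) : ℕ × ℕ) ≠ c := by
      intro h
      apply (mem_corners.mp hc).2.2
      have h1 := congrArg Prod.fst h
      have hsnd := congrArg Prod.snd h
      simp only at h1 hsnd
      rw [← h1, ← hsnd]
      exact μ.up_left_mem le_rfl (by omega) h2'
    rw [if_neg hne1, if_neg h2ne]
    exact T.row_strict i j1 j2 hj h2'
  col_strict := by
    intro i1 i2 j hi h2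
    have h2' := ((mem_eraseCorner hc _).mp h2).1
    have h2ne := ((mem_eraseCorner hc _).mp h2).2
    have hne1 : ((i1, j) : ℕ × ℕ) ≠ c := by
      intro h
      apply (mem_corners.mp hc).2.1
      have h1 := congrArg Prod.fst h
      have hsnd := congrArg Prod.snd h
      simp only at h1 hsnd
      rw [← h1, ← hsnd]
      exact μ.up_left_mem (by omega) le_rfl h2'
    rw [if_neg hne1, if_neg h2ne]
    exact T.col_strict i1 i2 j hi h2'
  zero_outside := by
    intro i j hm
    by_cases he : ((i, j) : ℕ × ℕ) = c
    · rw [if_pos he]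
    · rw [if_neg he]
      apply T.zero_outside
      intro hmem
      exact hm ((mem_eraseCorner hc _).mpr ⟨hmem, he⟩)

lemma syt_card_rec (μ : YoungDiagram) (hn : 0 < μ.card) :
    Nat.card (SYT μ) = ∑ c ∈ corners μ, Nat.card (SYT (eraseCorner μ c)) := by
  classical
  set G : (Σ c : {x // x ∈ corners μ}, SYT (eraseCorner μ c.1)) → SYT μ :=
    fun x => glue x.1.2 hn x.2 with hGdef
  have hGentry : ∀ (x : Σ c : {x // x ∈ corners μ}, SYT (eraseCorner μ c.1)) (i j : ℕ),
      (G x).entry i j = if (i, j) = x.1.1 then μ.card else x.2.entry i j := fun _ _ _ => rfl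
  have hbij : Function.Bijective G := by
    constructor
    · rintro ⟨⟨c, hc⟩, T⟩ ⟨⟨c', hc'⟩, T'⟩ heq
      have hent : ∀ i j, (G ⟨⟨c, hc⟩, T⟩).entry i j = (G ⟨⟨c', hc'⟩, T'⟩).entry i j := by
        intro i j; rw [heq]
      have hcc : c = c' := by
        by_contra hne
        have h1 := hent c.1 c.2
        rw [hGentry, hGentry] at h1
        rw [Prod.mk.eta, if_pos rfl, if_neg hne] at h1
        dsimp only at h1
        -- T'.entry c.1 c.2 = μ.card, but c ∉ supp or ≤ μ.card - 1 : contradiction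
        by_cases hmem : (c.1, c.2) ∈ eraseCorner μ c'
        · have := syt_mem_Icc T' hmem
          rw [card_eraseCorner hc'] at this
          simp only [Set.mem_Icc] at this
          omega
        · have := T'.zero_outside c.1 c.2 hmem
          omega
      subst hcc
      have hTT : T = T' := by
        apply SYT.ext'
        funext i j
        by_cases he : ((i, j) : ℕ × ℕ) = c
        · have hnmem : ((i, j) : ℕ × ℕ) ∉ eraseCorner μ c := by
            rw [mem_eraseCorner hc]
            tauto
          rw [T.zero_outside i j hnmem, T'.zero_outside i j hnmem]
        · have h1 := hent i j
          rw [hGentry, hGentry] at h1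
          rw [if_neg he, if_neg he] at h1
          exact h1
      rw [hTT]
    · intro T
      -- find the cell with the maximal entry
      have hmem : (μ.card : ℕ) ∈ Set.Icc 1 μ.card := by simp only [Set.mem_Icc]; omega
      obtain ⟨p, hpmem, hpval⟩ := T.bijOn.surjOn hmem
      simp only [Finset.mem_coe, YoungDiagram.mem_cells] at hpmem
      simp only at hpval
      have hcorner : p ∈ corners μ := by
        rw [mem_corners]
        refine ⟨hpmem, ?_, ?_⟩
        · intro hmem2
          have hlt := T.col_strict p.1 (p.1 + 1) p.2 (by omega) hmem2
          rw [hpval] at hlt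
          have := syt_mem_Icc T hmem2
          simp only [Set.mem_Icc] at this
          omega
        · intro hmem2
          have hlt := T.row_strict p.1 p.2 (p.2 + 1) (by omega) hmem2
          rw [hpval] at hlt
          have := syt_mem_Icc T hmem2
          simp only [Set.mem_Icc] at this
          omega
      have hpval' : T.entry p.1 p.2 = μ.card := by rw [← hpval]
      refine ⟨⟨⟨p, hcorner⟩, cut hcorner T hpval'⟩, ?_⟩
      apply SYT.ext'
      funext i j
      rw [hGentry]
      simp only
      by_cases he : ((i, j) : ℕ × ℕ) = p
      · rw [if_pos he]
        have h1 : i = p.1 := congrArg Prod.fst he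
        have h2 : j = p.2 := congrArg Prod.snd he
        rw [h1, h2, hpval']
      · rw [if_neg he]
        show (if ((i, j) : ℕ × ℕ) = p then 0 else T.entry i j) = T.entry i j
        rw [if_neg he]
  rw [← Nat.card_eq_of_bijective G hbij]
  have : ∀ i : {x // x ∈ corners μ}, Fintype (SYT (eraseCorner μ i.1)) := fun i =>
    Fintype.ofFinite _
  have h1 : Nat.card (Σ c : {x // x ∈ corners μ}, SYT (eraseCorner μ c.1))
      = ∑ c : {x // x ∈ corners μ}, Nat.card (SYT (eraseCorner μ c.1)) := by
    simp [Nat.card_eq_fintype_card, Fintype.card_sigma]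
  rw [h1, Finset.sum_coe_sort (corners μ) (fun c => Nat.card (SYT (eraseCorner μ c)))]

end YoungHelp

namespace YoungHelp

lemma main_q : ∀ n (μ : YoungDiagram), μ.card = n →
    (Nat.card (SYT μ) : ℚ)
      = (μ.card.factorial : ℚ) / ∏ c ∈ μ.cells, (hookLength μ c : ℚ) := by
  intro n
  induction n using Nat.strong_induction_on with
  | _ n ih =>
    intro μ hμ
    rcases Nat.eq_zero_or_pos μ.card with h0 | hpos
    · rw [syt_card_bot μ h0, h0]
      have hcc : μ.cells = ∅ := Finset.card_eq_zero.mp h0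
      rw [hcc]
      simp
    · rw [syt_card_rec μ hpos, rec_q μ hpos]
      push_cast
      refine Finset.sum_congr rfl fun c hc => ?_
      have hcard := card_eraseCorner hc
      have hih := ih (μ.card - 1) (by omega) (eraseCorner μ c) (by omega)
      rw [hcard] at hih
      exact hih

end YoungHelp

/-- The hook length formula: the number of standard Young tableaux of shape
`μ ⊢ n` equals `n!` divided by the product of the hook lengths of the cells. -/
theorem hook_length_formula (μ : YoungDiagram) :
    Nat.card (SYT μ) = μ.card.factorial / ∏ c ∈ μ.cells, hookLength μ c := by
  have h := YoungHelp.main_q μ.card μ rfl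
  have hH := YoungHelp.hooks_ne_zero μ
  have hmul : (Nat.card (SYT μ) : ℚ) * ∏ c ∈ μ.cells, (hookLength μ c : ℚ)
      = (μ.card.factorial : ℚ) := by
    rw [h]
    field_simp
  have hℕ : Nat.card (SYT μ) * ∏ c ∈ μ.cells, hookLength μ c = μ.card.factorial := by
    exact_mod_cast hmul
  have hpos : 0 < ∏ c ∈ μ.cells, hookLength μ c := by
    apply Finset.prod_pos
    intro c hc
    exact YoungHelp.hook_pos μ ((YoungDiagram.mem_cells c).mp hc)
  rw [← hℕ, Nat.mul_div_cancel _ hpos]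
end
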